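/- arXiv:2205.09072 — 7 statements merged into one kernel-verified Lean document; each statement's English description precedes it below -/
import Mathlib

section
/- Let S = {(x_i, y_i)}_{i=1}^n ⊆ ℝ × {−1,1} be a dataset with x_1 < x_2 < … < x_n, and let r ≥ 0 be such that |{i ∈ [n−1] : y_i ≠ y_{i+1}}| ≤ r. If θ = (w, b, v) satisfies the KKT conditions of the maximum-margin problem for a width-k depth-2 ReLU network on S, then the function N_θ : ℝ → ℝ is piecewise affine with at most 32r + 67 linear regions; equivalently, the set of points x ∈ ℝ at which N_θ is not locally affine has at most 32r + 66 elements. -/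
open Finset

/-- The ReLU activation function. -/
noncomputable def relu (z : ℝ) : ℝ := max 0 z

/-- A width-`k` depth-2 ReLU network with weights `w`, biases `b`, output weights `v`. -/
noncomputable def NNet {k : ℕ} (w b v : Fin k → ℝ) (x : ℝ) : ℝ :=
  ∑ j : Fin k, v j * relu (w j * x + b j)

/-- `θ = (w, b, v)` satisfies the KKT conditions of the maximum-margin problem
for the dataset `(x i, y i)`. -/
def IsKKT {n k : ℕ} (x y : Fin n → ℝ) (w b v : Fin k → ℝ) : Prop :=
  (∀ i, 1 ≤ y i * NNet w b v (x i)) ∧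
  ∃ (lam : Fin n → ℝ) (sg : Fin n → Fin k → ℝ),
    (∀ i, 0 ≤ lam i) ∧
    (∀ i j, sg i j ∈ Set.Icc (0 : ℝ) 1) ∧
    (∀ i j, 0 < w j * x i + b j → sg i j = 1) ∧
    (∀ i j, w j * x i + b j < 0 → sg i j = 0) ∧
    (∀ i, y i * NNet w b v (x i) ≠ 1 → lam i = 0) ∧
    (∀ j, v j ≠ 0 → w j = ∑ i, lam i * y i * v j * sg i j * x i) ∧
    (∀ j, v j ≠ 0 → b j = ∑ i, lam i * y i * v j * sg i j)

/-- `f` is locally affine at `x`: it agrees with an affine function on a neighborhood of `x`. -/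
def LocallyAffineAt (f : ℝ → ℝ) (x : ℝ) : Prop :=
  ∃ c d : ℝ, ∀ᶠ z in nhds x, f z = c * z + d

/-- `x` is an activation point of the network `(w, b, v)`. -/
def IsActivationPoint {k : ℕ} (w b v : Fin k → ℝ) (x : ℝ) : Prop :=
  ∃ j : Fin k, v j ≠ 0 ∧ w j ≠ 0 ∧ w j * x + b j = 0

/-- The derivative of `f` decreases at `x`: for all sufficiently small `ε > 0`,
the derivative at `x + ε` is smaller than the derivative at `x - ε`. -/
def DerivDecreasesAt (f : ℝ → ℝ) (x : ℝ) : Prop :=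
  ∃ ε₀ > (0 : ℝ), ∀ ε : ℝ, 0 < ε → ε < ε₀ → deriv f (x + ε) < deriv f (x - ε)

/-- The derivative of `f` increases at `x`: for all sufficiently small `ε > 0`,
the derivative at `x - ε` is smaller than the derivative at `x + ε`. -/
def DerivIncreasesAt (f : ℝ → ℝ) (x : ℝ) : Prop :=
  ∃ ε₀ > (0 : ℝ), ∀ ε : ℝ, 0 < ε → ε < ε₀ → deriv f (x - ε) < deriv f (x + ε)

/-!
Stationarity says `w j * z + b j = v j * Φ j z` with
`Φ j z = ∑ i, λ i * y i * σ' i j * (x i * z + 1)`.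
Subtracting these identities at breakpoints `z₁ < z₂` of neurons `j₁, j₂` whose weights `w` have
the same sign gives
`w j₁ * (z₂ - z₁) = - v j₁ * ∑ i, λ i * y i * (σ' i j₂ - σ' i j₁) * (x i * z₂ + 1)`,
where only data points in `[z₁, z₂]` contribute. Hence between two such breakpoints there is a
support vector, and on a stretch of the line where all labels equal `s` and `x` has a fixed sign,
for each sign of `w j` at most one breakpoint has `s * v j < 0`.

Cutting the line at `0` and after each label change gives at most `r + 2` such stretches; cutting
each stretch at its at most two breakpoints with `s * v j < 0` leaves at most three pieces on
which `s * N_θ` is convex. Support vectors satisfy `s * N_θ = 1`, so `s * N_θ` is constant between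
any three of them, and a piece carries at most five kinks for each sign of `w j`:
`30 (r + 2) ≤ 32 r + 66` in total.
-/

open Set

theorem mul_pos_of_same_sign {σ a b : ℝ} (ha : 0 < σ * a) (hb : 0 < σ * b) : 0 < a * b :=
  pos_of_mul_pos_right (a := σ * σ) (by linear_combination mul_pos ha hb) (mul_self_nonneg σ)

theorem Nat.exists_map_ne_map_succ {α : Type*} (f : ℕ → α) {a b : ℕ} (hab : a ≤ b)
    (h : f a ≠ f b) : ∃ m, a ≤ m ∧ m < b ∧ f m ≠ f (m + 1) := by
  induction b, hab using Nat.le_induction with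
  | base => exact absurd rfl h
  | succ b hab ih =>
    by_cases hb : f a = f b
    · exact ⟨b, hab, b.lt_succ_self, hb ▸ h⟩
    · obtain ⟨m, ham, hmb, hm⟩ := ih hb
      exact ⟨m, ham, hmb.trans b.lt_succ_self, hm⟩

theorem Set.exists_strictMono_fin_of_le_encard {α : Type*} [LinearOrder α] {P : Set α} {n : ℕ}
    (h : n ≤ P.encard) : ∃ z : Fin n → α, StrictMono z ∧ ∀ m, z m ∈ P := by
  obtain ⟨t, htP, ht⟩ := exists_subset_encard_eq h
  have htfin : t.Finite := finite_of_encard_eq_coe ht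
  have hcard : htfin.toFinset.card = n := by
    rw [← Nat.cast_inj (R := ℕ∞), ← ht, htfin.encard_eq_coe_toFinset_card]
  exact ⟨fun m => htfin.toFinset.orderEmbOfFin hcard m,
    (htfin.toFinset.orderEmbOfFin hcard).strictMono,
    fun m => htP (htfin.mem_toFinset.1 (htfin.toFinset.orderEmbOfFin_mem hcard m))⟩

theorem encard_le_five_of_interlaced {P V : Set ℝ}
    (hPV : ∀ p ∈ P, ∀ q ∈ P, p < q → ∃ u ∈ V, u ∈ Icc p q)
    (hVP : ∀ a ∈ V, ∀ c ∈ V, ∀ e ∈ V, a < c → c < e → ∀ z ∈ P, z ∉ Ioo a e) :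
    P.encard ≤ 5 := by
  by_contra! h
  obtain ⟨z, hz, hzP⟩ := exists_strictMono_fin_of_le_encard (Order.add_one_le_of_lt h)
  obtain ⟨u₁, hu₁, hu₁z⟩ := hPV _ (hzP 0) _ (hzP 1) (hz (by decide))
  obtain ⟨u₃, hu₃, hu₃z⟩ := hPV _ (hzP 2) _ (hzP 3) (hz (by decide))
  obtain ⟨u₅, hu₅, hu₅z⟩ := hPV _ (hzP 4) _ (hzP 5) (hz (by decide))
  have h12 : z 1 < z 2 := hz (by decide)
  have h34 : z 3 < z 4 := hz (by decide)
  have h23 : z 2 < z 3 := hz (by decide)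
  exact hVP u₁ hu₁ u₃ hu₃ u₅ hu₅ (by linarith [hu₁z.2, hu₃z.1]) (by linarith [hu₃z.2, hu₅z.1])
    (z 2) (hzP 2) ⟨by linarith [hu₁z.2], by linarith [hu₅z.1]⟩

theorem encard_inter_le_of_cuts {K R C : Set ℝ} (hR : Convex ℝ R) (hC : C.Finite) {m : ℕ∞}
    (h : ∀ I ⊆ R, Convex ℝ I → (∀ c ∈ C, I ⊆ Iio c ∨ I ⊆ Ici c) → (K ∩ I).encard ≤ m) :
    (K ∩ R).encard ≤ (C.encard + 1) * m := by
  classical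
  obtain ⟨C, rfl⟩ := hC.exists_finset_coe
  clear hC
  rw [encard_coe_eq_coe_finsetCard]
  induction C using Finset.induction_on_max generalizing R with
  | empty => simpa using h R subset_rfl hR (by simp)
  | insert a C hlt ih =>
    have hleft : (K ∩ (R ∩ Iio a)).encard ≤ (C.card + 1) * m := by
      refine ih (hR.inter (convex_Iio a)) fun I hIR hI hcut =>
        h I (hIR.trans inter_subset_left) hI ?_
      simp only [Finset.coe_insert, mem_insert_iff, Finset.mem_coe, forall_eq_or_imp]
      exact ⟨Or.inl (hIR.trans inter_subset_right), hcut⟩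
    have hright : (K ∩ (R ∩ Ici a)).encard ≤ m := by
      refine h _ inter_subset_left (hR.inter (convex_Ici a)) ?_
      simp only [Finset.coe_insert, mem_insert_iff, Finset.mem_coe, forall_eq_or_imp]
      exact ⟨Or.inr inter_subset_right, fun c hc => Or.inr fun t ht => (hlt c hc).le.trans ht.2⟩
    calc (K ∩ R).encard ≤ (K ∩ (R ∩ Iio a) ∪ K ∩ (R ∩ Ici a)).encard := by
          refine encard_le_encard fun t ⟨hK, hR⟩ => ?_
          rcases lt_or_ge t a with hta | hta
          exacts [Or.inl ⟨hK, hR, hta⟩, Or.inr ⟨hK, hR, hta⟩]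
      _ ≤ (C.card + 1) * m + m := (encard_union_le _ _).trans (add_le_add hleft hright)
      _ = ((insert a C).card + 1) * m := by
          rw [Finset.card_insert_of_notMem fun ha => (hlt a ha).false]
          push_cast
          ring

theorem forall_nonneg_or_forall_nonpos {I : Set ℝ} (hI : I.OrdConnected) {f : ℝ → ℝ}
    (hf : Continuous f) (hzero : ∀ ρ ∈ I, f ρ = 0 → I ⊆ Iio ρ ∨ I ⊆ Ici ρ) :
    (∀ t ∈ I, 0 ≤ f t) ∨ (∀ t ∈ I, f t ≤ 0) := by
  by_contra! h
  obtain ⟨⟨t, ht, hft⟩, u, hu, hfu⟩ := h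
  obtain ⟨ρ, hρ, hfρ⟩ := intermediate_value_uIcc hf.continuousOn
    (mem_uIcc.2 (Or.inl ⟨hft.le, hfu.le⟩) : (0 : ℝ) ∈ uIcc (f t) (f u))
  rcases hzero ρ (hI.uIcc_subset ht hu hρ) hfρ with hlt | hge
  · have htρ : t < ρ := hlt ht
    have huρ : u < ρ := hlt hu
    rcases mem_uIcc.1 hρ with ⟨-, h⟩ | ⟨-, h⟩ <;> linarith
  · have htρ : ρ ≤ t := hge ht
    have huρ : ρ ≤ u := hge hu
    rcases mem_uIcc.1 hρ with ⟨h, -⟩ | ⟨h, -⟩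
    · rw [← le_antisymm h htρ] at hfρ; linarith
    · rw [← le_antisymm h huρ] at hfρ; linarith

theorem ConvexOn.eqOn_Icc_of_eq {I : Set ℝ} {f : ℝ → ℝ} (hf : ConvexOn ℝ I f) {a c e d : ℝ}
    (ha : a ∈ I) (he : e ∈ I) (hac : a < c) (hce : c < e)
    (hfa : f a = d) (hfc : f c = d) (hfe : f e = d) : EqOn f (fun _ => d) (Icc a e) := by
  intro t ht
  have htI : t ∈ I := hf.1.ordConnected.out ha he ht
  refine le_antisymm ?_ ?_
  · calc f t ≤ max (f a) (f e) :=
          hf.le_on_segment ha he (by rwa [segment_eq_Icc (hac.trans hce).le])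
      _ = d := by rw [hfa, hfe, max_self]
  · rw [← hfc]
    rcases le_total t c with htc | hct
    · exact hf.le_left_of_right_le'' htI he htc hce (by rw [hfe, hfc])
    · exact hf.le_right_of_left_le'' ha htI hac hct (by rw [hfa, hfc])

theorem LocallyAffineAt.add {f g : ℝ → ℝ} {z : ℝ} (hf : LocallyAffineAt f z)
    (hg : LocallyAffineAt g z) : LocallyAffineAt (f + g) z := by
  obtain ⟨c, d, hf⟩ := hf
  obtain ⟨c', d', hg⟩ := hg
  refine ⟨c + c', d + d', ?_⟩
  filter_upwards [hf, hg] with t hft hgt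
  rw [Pi.add_apply, hft, hgt]
  ring

theorem locallyAffineAt_mul_relu_affine (c : ℝ) {a d z : ℝ} (h : a = 0 ∨ a * z + d ≠ 0) :
    LocallyAffineAt (fun t => c * relu (a * t + d)) z := by
  have hcont : Continuous fun t => a * t + d := by fun_prop
  rcases h with rfl | h
  · exact ⟨0, c * relu d, .of_forall fun t => by simp⟩
  rcases h.lt_or_gt with hneg | hpos
  · refine ⟨0, 0, ?_⟩
    filter_upwards [hcont.continuousAt.eventually_lt continuousAt_const hneg] with t ht
    simp [relu, max_eq_left ht.le]
  · refine ⟨c * a, c * d, ?_⟩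
    filter_upwards [continuousAt_const.eventually_lt hcont.continuousAt hpos] with t ht
    rw [relu, max_eq_right ht.le]
    ring

theorem NNet_eq_sum {k : ℕ} (w b v : Fin k → ℝ) :
    NNet w b v = ∑ j, fun t => v j * relu (w j * t + b j) := by
  ext t
  simp [NNet, Finset.sum_apply]

theorem isActivationPoint_of_not_locallyAffineAt {k : ℕ} {w b v : Fin k → ℝ} {z : ℝ}
    (h : ¬ LocallyAffineAt (NNet w b v) z) : IsActivationPoint w b v z := by
  by_contra hz
  simp only [IsActivationPoint, not_exists, not_and] at hz
  apply h
  rw [NNet_eq_sum]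
  refine Finset.sum_induction _ (LocallyAffineAt · z) (fun _ _ => LocallyAffineAt.add)
    ⟨0, 0, .of_forall fun t => by simp⟩ fun j _ => ?_
  by_cases hv : v j = 0
  · exact ⟨0, 0, .of_forall fun t => by simp [hv]⟩
  · exact locallyAffineAt_mul_relu_affine _ (or_iff_not_imp_left.2 (hz j hv))

theorem convexOn_mul_relu_affine {I : Set ℝ} (hI : Convex ℝ I) {c a d : ℝ}
    (h : 0 ≤ c ∨ (∀ t ∈ I, 0 ≤ a * t + d) ∨ (∀ t ∈ I, a * t + d ≤ 0)) :
    ConvexOn ℝ I fun t => c * relu (a * t + d) := by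
  rcases h with hc | hpos | hneg
  · exact ((convexOn_const 0 hI).sup (((LinearMap.mulLeft ℝ a).convexOn hI).add_const d)).smul hc
  · refine (((LinearMap.mulLeft ℝ (c * a)).convexOn hI).add_const (c * d)).congr fun t ht => ?_
    simp only [Pi.add_apply, LinearMap.mulLeft_apply, relu, max_eq_right (hpos t ht)]
    ring
  · exact (convexOn_const 0 hI).congr fun t ht => by simp [relu, max_eq_left (hneg t ht)]

theorem convexOn_mul_NNet {k : ℕ} {w b v : Fin k → ℝ} {s : ℝ} {I : Set ℝ} (hI : Convex ℝ I)
    (h : ∀ j, s * v j < 0 → (∀ t ∈ I, 0 ≤ w j * t + b j) ∨ (∀ t ∈ I, w j * t + b j ≤ 0)) :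
    ConvexOn ℝ I fun t => s * NNet w b v t := by
  have hsum : (fun t => s * NNet w b v t) = ∑ j, fun t => s * v j * relu (w j * t + b j) := by
    ext t
    simp [NNet, Finset.sum_apply, Finset.mul_sum, mul_assoc]
  rw [hsum]
  exact Finset.sum_induction _ (ConvexOn ℝ I) (fun _ _ => ConvexOn.add) (convexOn_const 0 hI)
    fun j _ => convexOn_mul_relu_affine hI ((le_or_gt 0 (s * v j)).imp_right (h j))

structure KKTMultipliers {n k : ℕ} (x y : Fin n → ℝ) (w b v : Fin k → ℝ) where
  lam : Fin n → ℝ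
  sg : Fin n → Fin k → ℝ
  lam_nonneg : ∀ i, 0 ≤ lam i
  sg_mem_Icc : ∀ i j, sg i j ∈ Icc (0 : ℝ) 1
  sg_eq_one : ∀ i j, 0 < w j * x i + b j → sg i j = 1
  sg_eq_zero : ∀ i j, w j * x i + b j < 0 → sg i j = 0
  lam_eq_zero : ∀ i, y i * NNet w b v (x i) ≠ 1 → lam i = 0
  w_eq : ∀ j, v j ≠ 0 → w j = ∑ i, lam i * y i * v j * sg i j * x i
  b_eq : ∀ j, v j ≠ 0 → b j = ∑ i, lam i * y i * v j * sg i j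

theorem IsKKT.nonempty_kktMultipliers {n k : ℕ} {x y : Fin n → ℝ} {w b v : Fin k → ℝ}
    (h : IsKKT x y w b v) : Nonempty (KKTMultipliers x y w b v) :=
  let ⟨_, lam, sg, h₁, h₂, h₃, h₄, h₅, h₆, h₇⟩ := h
  ⟨⟨lam, sg, h₁, h₂, h₃, h₄, h₅, h₆, h₇⟩⟩

namespace KKTMultipliers

variable {n k : ℕ} {x y : Fin n → ℝ} {w b v : Fin k → ℝ} (M : KKTMultipliers x y w b v)
  {i : Fin n} {j j₁ j₂ : Fin k} {z₁ z₂ : ℝ}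

theorem margin_eq_one (hi : M.lam i ≠ 0) : y i * NNet w b v (x i) = 1 :=
  not_not.1 (mt (M.lam_eq_zero i) hi)

theorem preactivation_eq (hv : v j ≠ 0) (z : ℝ) :
    w j * z + b j = v j * ∑ i, M.lam i * y i * M.sg i j * (x i * z + 1) := by
  rw [M.w_eq j hv, M.b_eq j hv, Finset.sum_mul, Finset.mul_sum, ← Finset.sum_add_distrib]
  exact Finset.sum_congr rfl fun i _ => by ring

theorem breakpoint_identity (hv₁ : v j₁ ≠ 0) (hv₂ : v j₂ ≠ 0) (h₁ : w j₁ * z₁ + b j₁ = 0)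
    (h₂ : w j₂ * z₂ + b j₂ = 0) :
    w j₁ * (z₂ - z₁) + v j₁ * ∑ i, M.lam i * y i * (M.sg i j₂ - M.sg i j₁) * (x i * z₂ + 1)
      = 0 := by
  have hΦ₂ : ∑ i, M.lam i * y i * M.sg i j₂ * (x i * z₂ + 1) = 0 :=
    (mul_eq_zero.1 ((M.preactivation_eq hv₂ z₂).symm.trans h₂)).resolve_left hv₂
  have hsplit : ∑ i, M.lam i * y i * (M.sg i j₂ - M.sg i j₁) * (x i * z₂ + 1)
      = ∑ i, M.lam i * y i * M.sg i j₂ * (x i * z₂ + 1)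
        - ∑ i, M.lam i * y i * M.sg i j₁ * (x i * z₂ + 1) := by
    rw [← Finset.sum_sub_distrib]
    exact Finset.sum_congr rfl fun i _ => by ring
  rw [hsplit, hΦ₂]
  linear_combination M.preactivation_eq hv₁ z₂ - h₁

theorem sg_eq_sg_of_notMem_Icc (hz : z₁ ≤ z₂) (hdir : 0 < w j₁ * w j₂)
    (h₁ : w j₁ * z₁ + b j₁ = 0) (h₂ : w j₂ * z₂ + b j₂ = 0) (hx : x i ∉ Icc z₁ z₂) :
    M.sg i j₁ = M.sg i j₂ := by
  have hside : 0 < (x i - z₁) * (x i - z₂) := by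
    rcases not_and_or.1 hx with hlt | hgt
    · exact mul_pos_of_neg_of_neg (by linarith) (by linarith)
    · exact mul_pos (by linarith) (by linarith)
  have hprod : 0 < (w j₁ * x i + b j₁) * (w j₂ * x i + b j₂) := by
    have e : (w j₁ * x i + b j₁) * (w j₂ * x i + b j₂)
        = (w j₁ * w j₂) * ((x i - z₁) * (x i - z₂)) := by
      linear_combination (w j₂ * x i + b j₂) * h₁ + (w j₁ * (x i - z₁)) * h₂
    rw [e]
    exact mul_pos hdir hside
  rcases mul_pos_iff.1 hprod with ⟨hp₁, hp₂⟩ | ⟨hn₁, hn₂⟩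
  · rw [M.sg_eq_one i j₁ hp₁, M.sg_eq_one i j₂ hp₂]
  · rw [M.sg_eq_zero i j₁ hn₁, M.sg_eq_zero i j₂ hn₂]

theorem mul_sub_sg_nonpos (hz : z₁ < z₂) (hdir : 0 < w j₁ * w j₂)
    (h₁ : w j₁ * z₁ + b j₁ = 0) (h₂ : w j₂ * z₂ + b j₂ = 0) (hx : x i ∈ Icc z₁ z₂) :
    w j₁ * (M.sg i j₂ - M.sg i j₁) ≤ 0 := by
  obtain ⟨hσ₁, hσ₁'⟩ := M.sg_mem_Icc i j₁
  obtain ⟨hσ₂, hσ₂'⟩ := M.sg_mem_Icc i j₂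
  rcases hx.1.eq_or_lt with rfl | hlt
  · have hsign : w j₁ * (w j₂ * x i + b j₂) < 0 := by
      have e : w j₁ * (w j₂ * x i + b j₂) = (w j₁ * w j₂) * (x i - z₂) := by
        linear_combination w j₁ * h₂
      rw [e]
      exact mul_neg_of_pos_of_neg hdir (by linarith)
    rcases mul_neg_iff.1 hsign with ⟨hw, hg⟩ | ⟨hw, hg⟩
    · rw [M.sg_eq_zero i j₂ hg]; nlinarith
    · rw [M.sg_eq_one i j₂ hg]; nlinarith
  · have hsign : 0 < w j₁ * (w j₁ * x i + b j₁) := by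
      have e : w j₁ * (w j₁ * x i + b j₁) = (w j₁ * w j₁) * (x i - z₁) := by
        linear_combination w j₁ * h₁
      rw [e]
      exact mul_pos (mul_self_pos.2 (left_ne_zero_of_mul hdir.ne')) (by linarith)
    rcases mul_pos_iff.1 hsign with ⟨hw, hg⟩ | ⟨hw, hg⟩
    · rw [M.sg_eq_one i j₁ hg]; nlinarith
    · rw [M.sg_eq_zero i j₁ hg]; nlinarith

theorem exists_lam_ne_zero_mem_Icc (hz : z₁ < z₂) (hdir : 0 < w j₁ * w j₂)
    (hv₁ : v j₁ ≠ 0) (hv₂ : v j₂ ≠ 0) (h₁ : w j₁ * z₁ + b j₁ = 0)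
    (h₂ : w j₂ * z₂ + b j₂ = 0) : ∃ i, M.lam i ≠ 0 ∧ x i ∈ Icc z₁ z₂ := by
  by_contra! hno
  have hsum : ∑ i, M.lam i * y i * (M.sg i j₂ - M.sg i j₁) * (x i * z₂ + 1) = 0 := by
    refine Finset.sum_eq_zero fun i _ => ?_
    by_cases hl : M.lam i = 0
    · simp [hl]
    · rw [M.sg_eq_sg_of_notMem_Icc hz.le hdir h₁ h₂ (hno i hl), sub_self]
      ring
  have hid := M.breakpoint_identity hv₁ hv₂ h₁ h₂
  rw [hsum, mul_zero, add_zero] at hid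
  rcases mul_eq_zero.1 hid with hw | hz'
  · exact left_ne_zero_of_mul hdir.ne' hw
  · linarith

theorem nonneg_mul_of_breakpoint_lt {s : ℝ} (hs : s * s = 1) (hz : z₁ < z₂)
    (hdir : 0 < w j₁ * w j₂) (hv₁ : v j₁ ≠ 0) (hv₂ : v j₂ ≠ 0) (h₁ : w j₁ * z₁ + b j₁ = 0)
    (h₂ : w j₂ * z₂ + b j₂ = 0) (hlabel : ∀ i, M.lam i ≠ 0 → x i ∈ Icc z₁ z₂ → y i = s)
    (hside : ∀ i, x i ∈ Icc z₁ z₂ → 0 ≤ x i * z₂) : 0 ≤ s * v j₁ := by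
  by_contra! hbad
  set A := ∑ i, M.lam i * y i * (M.sg i j₂ - M.sg i j₁) * (x i * z₂ + 1)
  have hA : s * w j₁ * A ≤ 0 := by
    rw [Finset.mul_sum]
    refine Finset.sum_nonpos fun i _ => ?_
    by_cases hx : x i ∈ Icc z₁ z₂
    · by_cases hl : M.lam i = 0
      · simp [hl]
      rw [hlabel i hl hx]
      calc s * w j₁ * (M.lam i * s * (M.sg i j₂ - M.sg i j₁) * (x i * z₂ + 1))
          = M.lam i * (w j₁ * (M.sg i j₂ - M.sg i j₁)) * (x i * z₂ + 1) := by
            linear_combination (M.lam i * w j₁ * (M.sg i j₂ - M.sg i j₁) * (x i * z₂ + 1)) * hs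
        _ ≤ 0 := mul_nonpos_of_nonpos_of_nonneg
            (mul_nonpos_of_nonneg_of_nonpos (M.lam_nonneg i) (M.mul_sub_sg_nonpos hz hdir h₁ h₂ hx))
            (by linarith [hside i hx])
    · rw [M.sg_eq_sg_of_notMem_Icc hz.le hdir h₁ h₂ hx]
      simp
  have hid := M.breakpoint_identity hv₁ hv₂ h₁ h₂
  have key : w j₁ * w j₁ * (z₂ - z₁) = -(s * v j₁) * (s * w j₁ * A) := by
    linear_combination w j₁ * hid + v j₁ * w j₁ * A * hs
  have hpos : 0 < w j₁ * w j₁ * (z₂ - z₁) :=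
    mul_pos (mul_self_pos.2 (left_ne_zero_of_mul hdir.ne')) (by linarith)
  have hnonpos := mul_nonpos_of_nonneg_of_nonpos (neg_nonneg.2 hbad.le) hA
  linarith

theorem encard_kinks_inter_le_ten (M : KKTMultipliers x y w b v) {s : ℝ} (hs : s * s = 1)
    {I : Set ℝ} (hI : Convex ℝ I)
    (hlabel : ∀ i, x i ∈ I → y i = s)
    (hsign : ∀ j, s * v j < 0 → (∀ t ∈ I, 0 ≤ w j * t + b j) ∨ (∀ t ∈ I, w j * t + b j ≤ 0)) :
    ({z | ¬ LocallyAffineAt (NNet w b v) z} ∩ I).encard ≤ 10 := by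
  set K := {z | ¬ LocallyAffineAt (NNet w b v) z} ∩ I
  set V := {u ∈ I | ∃ i, M.lam i ≠ 0 ∧ x i = u}
  have hV : ∀ u ∈ V, s * NNet w b v u = 1 := by
    rintro _ ⟨hu, i, hi, rfl⟩
    rw [← hlabel i hu]
    exact M.margin_eq_one hi
  have hVK : ∀ a ∈ V, ∀ c ∈ V, ∀ e ∈ V, a < c → c < e → ∀ z ∈ K, z ∉ Ioo a e := by
    intro a ha c hc e he hac hce z hz hzae
    have hconst := (convexOn_mul_NNet hI hsign).eqOn_Icc_of_eq ha.1 he.1 hac hce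
      (hV a ha) (hV c hc) (hV e he)
    refine hz.1 ⟨0, s, Filter.eventually_of_mem (Ioo_mem_nhds hzae.1 hzae.2) fun t ht => ?_⟩
    linear_combination s * hconst (Ioo_subset_Icc_self ht) - NNet w b v t * hs
  let P (σ : ℝ) := {z ∈ K | ∃ j, v j ≠ 0 ∧ 0 < σ * w j ∧ w j * z + b j = 0}
  have hP : ∀ σ, (P σ).encard ≤ 5 := by
    refine fun σ => encard_le_five_of_interlaced (fun p hp q hq hpq => ?_)
      fun a ha c hc e he hac hce z hz => hVK a ha c hc e he hac hce z hz.1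
    obtain ⟨⟨-, hpI⟩, j₁, hv₁, hσ₁, h₁⟩ := hp
    obtain ⟨⟨-, hqI⟩, j₂, hv₂, hσ₂, h₂⟩ := hq
    obtain ⟨i, hi, hx⟩ :=
      M.exists_lam_ne_zero_mem_Icc hpq (mul_pos_of_same_sign hσ₁ hσ₂) hv₁ hv₂ h₁ h₂
    exact ⟨x i, ⟨hI.ordConnected.out hpI hqI hx, i, hi, rfl⟩, hx⟩
  have hKP : K ⊆ P 1 ∪ P (-1) := by
    intro z hz
    obtain ⟨j, hv, hw, h⟩ := isActivationPoint_of_not_locallyAffineAt hz.1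
    rcases hw.lt_or_gt with hneg | hpos
    · exact Or.inr ⟨hz, j, hv, by linarith, h⟩
    · exact Or.inl ⟨hz, j, hv, by linarith, h⟩
  calc K.encard ≤ (P 1).encard + (P (-1)).encard :=
        (encard_le_encard hKP).trans (encard_union_le _ _)
    _ ≤ 5 + 5 := add_le_add (hP 1) (hP (-1))
    _ = 10 := by norm_num

theorem encard_kinks_inter_le_thirty (M : KKTMultipliers x y w b v) {s : ℝ} (hs : s * s = 1)
    {R : Set ℝ} (hR : Convex ℝ R)
    (hlabel : ∀ i, x i ∈ R → y i = s) (hside : ∀ t ∈ R, ∀ u ∈ R, 0 ≤ t * u) :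
    ({z | ¬ LocallyAffineAt (NNet w b v) z} ∩ R).encard ≤ 30 := by
  let B (σ : ℝ) := {z ∈ R | ∃ j, v j ≠ 0 ∧ 0 < σ * w j ∧ s * v j < 0 ∧ w j * z + b j = 0}
  have hB : ∀ σ, (B σ).Subsingleton := by
    intro σ
    suffices ∀ z₁ ∈ B σ, ∀ z₂ ∈ B σ, ¬ z₁ < z₂ from
      fun z₁ h₁ z₂ h₂ => le_antisymm (not_lt.1 (this _ h₂ _ h₁)) (not_lt.1 (this _ h₁ _ h₂))
    rintro z₁ ⟨hz₁, j₁, hv₁, hσ₁, hbad, h₁⟩ z₂ ⟨hz₂, j₂, hv₂, hσ₂, -, h₂⟩ hz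
    have hIcc : Icc z₁ z₂ ⊆ R := hR.ordConnected.out hz₁ hz₂
    exact (M.nonneg_mul_of_breakpoint_lt hs hz (mul_pos_of_same_sign hσ₁ hσ₂) hv₁ hv₂ h₁ h₂
      (fun i _ hx => hlabel i (hIcc hx)) fun i hx => hside _ (hIcc hx) _ hz₂).not_gt hbad
  have hBcard : (B 1 ∪ B (-1)).encard ≤ 2 :=
    calc (B 1 ∪ B (-1)).encard ≤ (B 1).encard + (B (-1)).encard := encard_union_le _ _
      _ ≤ 1 + 1 := add_le_add (encard_le_one_iff_subsingleton.2 (hB 1))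
          (encard_le_one_iff_subsingleton.2 (hB (-1)))
      _ = 2 := by norm_num
  calc ({z | ¬ LocallyAffineAt (NNet w b v) z} ∩ R).encard
      ≤ ((B 1 ∪ B (-1)).encard + 1) * 10 := by
        refine encard_inter_le_of_cuts hR (finite_of_encard_le_coe hBcard)
          fun I hIR hI hcut => M.encard_kinks_inter_le_ten hs hI (fun i hx => hlabel i (hIR hx))
            fun j hj => ?_
        by_cases hw : w j = 0
        · simp only [hw, zero_mul, zero_add]
          exact (le_total 0 (b j)).imp (fun h _ _ => h) fun h _ _ => h
        refine forall_nonneg_or_forall_nonpos hI.ordConnected (by fun_prop) fun ρ hρ h => hcut ρ ?_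
        have hv : v j ≠ 0 := fun hv => by simp [hv] at hj
        rcases Ne.lt_or_gt hw with hneg | hpos
        · exact Or.inr ⟨hIR hρ, j, hv, by linarith, hj, h⟩
        · exact Or.inl ⟨hIR hρ, j, hv, by linarith, hj, h⟩
    _ ≤ (2 + 1) * 10 := by gcongr
    _ = 30 := by norm_num

end KKTMultipliers

theorem eq_of_forall_label_change_cut {n : ℕ} {x y : Fin n → ℝ} (hx : StrictMono x) {I : Set ℝ}
    (hcut : ∀ (i : Fin n) (h : (i : ℕ) + 1 < n), y i ≠ y ⟨(i : ℕ) + 1, h⟩ →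
      I ⊆ Iio (x ⟨(i : ℕ) + 1, h⟩) ∨ I ⊆ Ici (x ⟨(i : ℕ) + 1, h⟩))
    {p q : Fin n} (hp : x p ∈ I) (hq : x q ∈ I) : y p = y q := by
  wlog hpq : p ≤ q
  · exact (this hx hcut hq hp (le_of_not_ge hpq)).symm
  by_contra hne
  let Y : ℕ → ℝ := fun m => if h : m < n then y ⟨m, h⟩ else 0
  obtain ⟨m, hpm, hmq, hm⟩ := Nat.exists_map_ne_map_succ Y hpq (by simpa [Y] using hne)
  have hm₁ : m + 1 < n := by omega
  simp only [Y, dif_pos (show m < n by omega), dif_pos hm₁] at hm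
  rcases hcut ⟨m, by omega⟩ hm₁ hm with hlt | hge
  · exact (hx.monotone (show (⟨m + 1, hm₁⟩ : Fin n) ≤ q from hmq)).not_gt (hlt hq)
  · exact (hx (show p < (⟨m + 1, hm₁⟩ : Fin n) from Nat.lt_succ_of_le hpm)).not_ge (hge hp)

theorem exists_label_of_forall_label_change_cut {n : ℕ} {x y : Fin n → ℝ} (hx : StrictMono x)
    (hy : ∀ i, y i = 1 ∨ y i = -1) {I : Set ℝ}
    (hcut : ∀ (i : Fin n) (h : (i : ℕ) + 1 < n), y i ≠ y ⟨(i : ℕ) + 1, h⟩ →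
      I ⊆ Iio (x ⟨(i : ℕ) + 1, h⟩) ∨ I ⊆ Ici (x ⟨(i : ℕ) + 1, h⟩)) :
    ∃ s : ℝ, s * s = 1 ∧ ∀ i, x i ∈ I → y i = s := by
  by_cases h : ∃ i, x i ∈ I
  · obtain ⟨i₀, hi₀⟩ := h
    exact ⟨y i₀, by rcases hy i₀ with h | h <;> rw [h] <;> norm_num,
      fun i hi => eq_of_forall_label_change_cut hx hcut hi hi₀⟩
  · exact ⟨1, one_mul 1, fun i hi => absurd ⟨i, hi⟩ h⟩

/-- If `θ = (w, b, v)` satisfies the KKT conditions of the maximum-margin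
problem for a dataset whose labels change sign at most `r` times, then the set of points
where `N_θ` is not locally affine has at most `32 r + 66` elements (equivalently, `N_θ`
is piecewise affine with at most `32 r + 67` linear regions). -/
theorem stmt0 {n k : ℕ} (x y : Fin n → ℝ)
    (hx : StrictMono x) (hy : ∀ i, y i = 1 ∨ y i = -1)
    (r : ℕ)
    (hr : {i : Fin n | ∃ h : (i : ℕ) + 1 < n, y i ≠ y ⟨(i : ℕ) + 1, h⟩}.ncard ≤ r)
    (w b v : Fin k → ℝ)
    (hKKT : IsKKT x y w b v) :
    {z : ℝ | ¬ LocallyAffineAt (NNet w b v) z}.encard ≤ (32 * r + 66 : ℕ) := by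
  obtain ⟨M⟩ := hKKT.nonempty_kktMultipliers
  set F := {i : Fin n | ∃ h : (i : ℕ) + 1 < n, y i ≠ y ⟨(i : ℕ) + 1, h⟩}
  let cut (i : Fin n) : ℝ := if h : (i : ℕ) + 1 < n then x ⟨(i : ℕ) + 1, h⟩ else 0
  have hC : (insert 0 (cut '' F)).encard ≤ r + 1 := by
    grw [encard_insert_le, encard_image_le, ← (toFinite F).cast_ncard_eq, hr]
  calc {z : ℝ | ¬ LocallyAffineAt (NNet w b v) z}.encard
      = ({z | ¬ LocallyAffineAt (NNet w b v) z} ∩ univ).encard := by rw [inter_univ]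
    _ ≤ ((insert 0 (cut '' F)).encard + 1) * 30 :=
        encard_inter_le_of_cuts convex_univ (toFinite _) fun I _ hI hcut => ?_
    _ ≤ (r + 1 + 1) * 30 := by gcongr
    _ ≤ (32 * r + 66 : ℕ) := by norm_cast; omega
  obtain ⟨s, hs, hlabel⟩ := exists_label_of_forall_label_change_cut hx hy fun i h hne =>
    hcut _ (mem_insert_of_mem _ ⟨i, ⟨h, hne⟩, by simp [cut, h]⟩)
  refine M.encard_kinks_inter_le_thirty hs hI hlabel fun t ht u hu => ?_
  rcases hcut 0 (mem_insert _ _) with hneg | hpos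
  · exact mul_nonneg_of_nonpos_of_nonpos (hneg ht).le (hneg hu).le
  · exact mul_nonneg (hpos ht) (hpos hu)
end

section
/- Let S = {(x_i, y_i)}_{i=1}^n ⊆ ℝ × {−1,1} be a dataset with x_1 < x_2 < … < x_n, and suppose θ = (w, b, v) satisfies the KKT conditions of the maximum-margin problem for a width-k depth-2 ReLU network on S. Let I' = {i ∈ [n] : y_i N_θ(x_i) = 1}, enumerated as i_1 < i_2 < … < i_q. Then for every ℓ ∈ [q−1], the network N_θ has at most two activation points in the open interval (x_{i_ℓ}, x_{i_{ℓ+1}}); moreover, N_θ has at most one activation point in (−∞, x_{i_1}) and at most one activation point in (x_{i_q}, ∞). -/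
open Finset

lemma sg_agree (wj wj' bj bj' a a' xi sja sja' : ℝ)
    (ha : wj * a + bj = 0) (ha' : wj' * a' + bj' = 0)
    (hsign : 0 < wj * wj')
    (hprod : 0 < (xi - a) * (xi - a'))
    (hpos : 0 < wj * xi + bj → sja = 1)
    (hneg : wj * xi + bj < 0 → sja = 0)
    (hpos' : 0 < wj' * xi + bj' → sja' = 1)
    (hneg' : wj' * xi + bj' < 0 → sja' = 0) :
    sja = sja' := by
  have e : wj * xi + bj = wj * (xi - a) := by linear_combination ha
  have e' : wj' * xi + bj' = wj' * (xi - a') := by linear_combination ha'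
  rcases lt_trichotomy (wj * (xi - a)) 0 with h | h | h
  · have h' : wj' * (xi - a') < 0 := by nlinarith
    rw [hneg (by rw [e]; exact h), hneg' (by rw [e']; exact h')]
  · exfalso
    have h2 : 0 < (wj * (xi - a)) * (wj' * (xi - a')) := by
      have h3 := mul_pos hsign hprod
      nlinarith [h3]
    rw [h, zero_mul] at h2
    exact lt_irrefl 0 h2
  · have h' : 0 < wj' * (xi - a') := by nlinarith
    rw [hpos (by rw [e]; exact h), hpos' (by rw [e']; exact h')]

lemma act_subsingleton {n k : ℕ} (x y : Fin n → ℝ) (w b v : Fin k → ℝ)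
    (lam : Fin n → ℝ) (sg : Fin n → Fin k → ℝ)
    (hsgpos : ∀ i j, 0 < w j * x i + b j → sg i j = 1)
    (hsgneg : ∀ i j, w j * x i + b j < 0 → sg i j = 0)
    (hw : ∀ j, v j ≠ 0 → w j = ∑ i, lam i * y i * v j * sg i j * x i)
    (hb : ∀ j, v j ≠ 0 → b j = ∑ i, lam i * y i * v j * sg i j)
    (P : ℝ → Prop)
    (hside : ∀ i, lam i ≠ 0 → ∀ a a', P a → P a' → 0 < (x i - a) * (x i - a'))
    (s : ℝ) :
    {z | P z ∧ ∃ j, v j ≠ 0 ∧ 0 < s * w j ∧ w j * z + b j = 0}.Subsingleton := by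
  rintro a ⟨hPa, j, hvj, hwj, ha⟩ a' ⟨hPa', j', hvj', hwj', ha'⟩
  have hsign : 0 < w j * w j' := by
    by_contra hcon
    push_neg at hcon
    nlinarith [mul_pos hwj hwj', sq_nonneg s]
  have hsgag : ∀ i, lam i = 0 ∨ sg i j = sg i j' := by
    intro i
    by_cases hli : lam i = 0
    · exact Or.inl hli
    · exact Or.inr (sg_agree (w j) (w j') (b j) (b j') a a' (x i) (sg i j) (sg i j')
        ha ha' hsign (hside i hli a a' hPa hPa')
        (hsgpos i j) (hsgneg i j) (hsgpos i j') (hsgneg i j'))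
  set Sx : ℝ := ∑ i, lam i * y i * sg i j * x i with hSx
  set S1 : ℝ := ∑ i, lam i * y i * sg i j with hS1
  have hwj_eq : w j = v j * Sx := by
    rw [hw j hvj, hSx, Finset.mul_sum]; exact Finset.sum_congr rfl fun i _ => by ring
  have hbj_eq : b j = v j * S1 := by
    rw [hb j hvj, hS1, Finset.mul_sum]; exact Finset.sum_congr rfl fun i _ => by ring
  have hwj'_eq : w j' = v j' * Sx := by
    rw [hw j' hvj', hSx, Finset.mul_sum]
    refine Finset.sum_congr rfl fun i _ => ?_
    rcases hsgag i with h | h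
    · simp [h]
    · rw [← h]; ring
  have hbj'_eq : b j' = v j' * S1 := by
    rw [hb j' hvj', hS1, Finset.mul_sum]
    refine Finset.sum_congr rfl fun i _ => ?_
    rcases hsgag i with h | h
    · simp [h]
    · rw [← h]; ring
  have hwne : w j ≠ 0 := by intro h; rw [h, mul_zero] at hwj; exact lt_irrefl 0 hwj
  have hSxne : Sx ≠ 0 := by
    intro h; apply hwne; rw [hwj_eq, h, mul_zero]
  have h1 : Sx * a + S1 = 0 := by
    have : v j * (Sx * a + S1) = 0 := by rw [hwj_eq, hbj_eq] at ha; linarith [ha]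
    exact (mul_eq_zero.1 this).resolve_left hvj
  have h2 : Sx * a' + S1 = 0 := by
    have : v j' * (Sx * a' + S1) = 0 := by rw [hwj'_eq, hbj'_eq] at ha'; linarith [ha']
    exact (mul_eq_zero.1 this).resolve_left hvj'
  have : Sx * (a - a') = 0 := by ring_nf; linarith
  rcases mul_eq_zero.1 this with h | h
  · exact absurd h hSxne
  · linarith

lemma tail_pos {n k : ℕ} (x y : Fin n → ℝ) (w b v : Fin k → ℝ)
    (lam : Fin n → ℝ) (sg : Fin n → Fin k → ℝ)
    (hsgneg : ∀ i j, w j * x i + b j < 0 → sg i j = 0)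
    (hw : ∀ j, v j ≠ 0 → w j = ∑ i, lam i * y i * v j * sg i j * x i)
    (j : Fin k) (hvj : v j ≠ 0) (hwj : w j ≠ 0)
    (a : ℝ) (ha : w j * a + b j = 0)
    (hall : ∀ i, lam i = 0 ∨ a < x i) :
    0 < w j := by
  rcases hwj.lt_or_gt with hneg | hpos
  · exfalso
    apply hneg.ne
    rw [hw j hvj]
    refine Finset.sum_eq_zero fun i _ => ?_
    rcases hall i with h | h
    · simp [h]
    · have : w j * x i + b j < 0 := by nlinarith
      rw [hsgneg i j this]; ring
  · exact hpos

lemma tail_neg {n k : ℕ} (x y : Fin n → ℝ) (w b v : Fin k → ℝ)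
    (lam : Fin n → ℝ) (sg : Fin n → Fin k → ℝ)
    (hsgneg : ∀ i j, w j * x i + b j < 0 → sg i j = 0)
    (hw : ∀ j, v j ≠ 0 → w j = ∑ i, lam i * y i * v j * sg i j * x i)
    (j : Fin k) (hvj : v j ≠ 0) (hwj : w j ≠ 0)
    (a : ℝ) (ha : w j * a + b j = 0)
    (hall : ∀ i, lam i = 0 ∨ x i < a) :
    w j < 0 := by
  rcases hwj.lt_or_gt with hneg | hpos
  · exact hneg
  · exfalso
    apply hpos.ne'
    rw [hw j hvj]
    refine Finset.sum_eq_zero fun i _ => ?_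
    rcases hall i with h | h
    · simp [h]
    · have : w j * x i + b j < 0 := by nlinarith
      rw [hsgneg i j this]; ring

/-- With `I' = {i : y_i N_θ(x_i) = 1}` enumerated by the strictly monotone
`idx : Fin q → Fin n`, the network has at most two activation points in every open interval
`(x_{i_ℓ}, x_{i_{ℓ+1}})`, at most one activation point in `(-∞, x_{i_1})`, and at most one
activation point in `(x_{i_q}, ∞)`. -/
theorem stmt1 {n k : ℕ} (x y : Fin n → ℝ)
    (hx : StrictMono x) (hy : ∀ i, y i = 1 ∨ y i = -1)
    (w b v : Fin k → ℝ) (hKKT : IsKKT x y w b v)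
    (q : ℕ) (idx : Fin q → Fin n) (hmono : StrictMono idx)
    (hrange : ∀ i : Fin n, y i * NNet w b v (x i) = 1 ↔ i ∈ Set.range idx) :
    (∀ (ℓ : ℕ) (h : ℓ + 1 < q),
      {z ∈ Set.Ioo (x (idx ⟨ℓ, Nat.lt_of_succ_lt h⟩)) (x (idx ⟨ℓ + 1, h⟩)) |
        IsActivationPoint w b v z}.encard ≤ 2) ∧
    (∀ h0 : 0 < q,
      {z ∈ Set.Iio (x (idx ⟨0, h0⟩)) | IsActivationPoint w b v z}.encard ≤ 1 ∧
      {z ∈ Set.Ioi (x (idx ⟨q - 1, Nat.sub_lt h0 Nat.one_pos⟩)) |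
        IsActivationPoint w b v z}.encard ≤ 1) := by
  obtain ⟨hmargin, lam, sg, hlamnn, hsgIcc, hsgpos, hsgneg, hlam0, hw, hb⟩ := hKKT
  have hsupp : ∀ i, lam i ≠ 0 → i ∈ Set.range idx := by
    intro i hli
    by_contra hni
    exact hli (hlam0 i (fun he => hni ((hrange i).1 he)))
  constructor
  · intro ℓ h
    set L := x (idx ⟨ℓ, Nat.lt_of_succ_lt h⟩) with hL
    set R := x (idx ⟨ℓ + 1, h⟩) with hR
    have hside : ∀ i, lam i ≠ 0 → ∀ a a', a ∈ Set.Ioo L R → a' ∈ Set.Ioo L R →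
        0 < (x i - a) * (x i - a') := by
      intro i hli a a' ha ha'
      obtain ⟨m, hm⟩ := hsupp i hli
      rcases le_or_gt (m : ℕ) ℓ with hm1 | hm1
      · have hxi : x i ≤ L := by
          rw [← hm, hL]
          exact hx.monotone (hmono.monotone (by rw [Fin.le_def]; exact hm1))
        have h1 : x i - a < 0 := by have := ha.1; simp only [Set.mem_Ioo] at ha; linarith [ha.1]
        have h2 : x i - a' < 0 := by simp only [Set.mem_Ioo] at ha'; linarith [ha'.1]
        exact mul_pos_of_neg_of_neg h1 h2
      · have hxi : R ≤ x i := by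
          rw [← hm, hR]
          exact hx.monotone (hmono.monotone (by rw [Fin.le_def]; exact hm1))
        have h1 : 0 < x i - a := by simp only [Set.mem_Ioo] at ha; linarith [ha.2]
        have h2 : 0 < x i - a' := by simp only [Set.mem_Ioo] at ha'; linarith [ha'.2]
        exact mul_pos h1 h2
    have hplus := act_subsingleton x y w b v lam sg hsgpos hsgneg hw hb
        (· ∈ Set.Ioo L R) hside 1
    have hminus := act_subsingleton x y w b v lam sg hsgpos hsgneg hw hb
        (· ∈ Set.Ioo L R) hside (-1)
    have hsub : {z ∈ Set.Ioo L R | IsActivationPoint w b v z} ⊆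
        {z | z ∈ Set.Ioo L R ∧ ∃ j, v j ≠ 0 ∧ 0 < (1:ℝ) * w j ∧ w j * z + b j = 0} ∪
        {z | z ∈ Set.Ioo L R ∧ ∃ j, v j ≠ 0 ∧ 0 < (-1:ℝ) * w j ∧ w j * z + b j = 0} := by
      rintro z ⟨hz, j, hvj, hwj, hzj⟩
      rcases hwj.lt_or_gt with hneg | hpos
      · right; exact ⟨hz, j, hvj, by linarith, hzj⟩
      · left; exact ⟨hz, j, hvj, by linarith, hzj⟩
    calc {z ∈ Set.Ioo L R | IsActivationPoint w b v z}.encard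
        ≤ _ := Set.encard_mono hsub
      _ ≤ _ + _ := Set.encard_union_le _ _
      _ ≤ 1 + 1 := add_le_add (Set.encard_le_one_iff.2 (fun a b ha hb => hplus ha hb)) (Set.encard_le_one_iff.2 (fun a b ha hb => hminus ha hb))
      _ = 2 := by norm_num
  · intro h0
    constructor
    · set L := x (idx ⟨0, h0⟩) with hLdef
      have hge : ∀ i, lam i ≠ 0 → L ≤ x i := by
        intro i hli
        obtain ⟨m, hm⟩ := hsupp i hli
        rw [← hm, hLdef]
        exact hx.monotone (hmono.monotone (by rw [Fin.le_def]; exact Nat.zero_le _))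
      have hside : ∀ i, lam i ≠ 0 → ∀ a a', a ∈ Set.Iio L → a' ∈ Set.Iio L →
          0 < (x i - a) * (x i - a') := by
        intro i hli a a' ha ha'
        have := hge i hli
        simp only [Set.mem_Iio] at ha ha'
        have h1 : 0 < x i - a := by linarith
        have h2 : 0 < x i - a' := by linarith
        exact mul_pos h1 h2
      have hplus := act_subsingleton x y w b v lam sg hsgpos hsgneg hw hb
          (· ∈ Set.Iio L) hside 1
      have hsub : {z ∈ Set.Iio L | IsActivationPoint w b v z} ⊆
          {z | z ∈ Set.Iio L ∧ ∃ j, v j ≠ 0 ∧ 0 < (1:ℝ) * w j ∧ w j * z + b j = 0} := by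
        rintro z ⟨hz, j, hvj, hwj, hzj⟩
        have hall : ∀ i, lam i = 0 ∨ z < x i := by
          intro i
          rcases em (lam i = 0) with h' | h'
          · exact Or.inl h'
          · exact Or.inr (lt_of_lt_of_le hz (hge i h'))
        have hwpos := tail_pos x y w b v lam sg hsgneg hw j hvj hwj z hzj hall
        exact ⟨hz, j, hvj, by linarith, hzj⟩
      exact le_trans (Set.encard_mono hsub) (Set.encard_le_one_iff.2 (fun a b ha hb => hplus ha hb))
    · set R := x (idx ⟨q - 1, Nat.sub_lt h0 Nat.one_pos⟩) with hRdef
      have hle : ∀ i, lam i ≠ 0 → x i ≤ R := by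
        intro i hli
        obtain ⟨m, hm⟩ := hsupp i hli
        rw [← hm, hRdef]
        exact hx.monotone (hmono.monotone
          (by rw [Fin.le_def]; exact Nat.le_sub_one_of_lt m.isLt))
      have hside : ∀ i, lam i ≠ 0 → ∀ a a', a ∈ Set.Ioi R → a' ∈ Set.Ioi R →
          0 < (x i - a) * (x i - a') := by
        intro i hli a a' ha ha'
        have := hle i hli
        simp only [Set.mem_Ioi] at ha ha'
        have h1 : x i - a < 0 := by linarith
        have h2 : x i - a' < 0 := by linarith
        exact mul_pos_of_neg_of_neg h1 h2
      have hminus := act_subsingleton x y w b v lam sg hsgpos hsgneg hw hb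
          (· ∈ Set.Ioi R) hside (-1)
      have hsub : {z ∈ Set.Ioi R | IsActivationPoint w b v z} ⊆
          {z | z ∈ Set.Ioi R ∧ ∃ j, v j ≠ 0 ∧ 0 < (-1:ℝ) * w j ∧ w j * z + b j = 0} := by
        rintro z ⟨hz, j, hvj, hwj, hzj⟩
        have hall : ∀ i, lam i = 0 ∨ x i < z := by
          intro i
          rcases em (lam i = 0) with h' | h'
          · exact Or.inl h'
          · exact Or.inr (lt_of_le_of_lt (hle i h') hz)
        have hwneg := tail_neg x y w b v lam sg hsgneg hw j hvj hwj z hzj hall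
        exact ⟨hz, j, hvj, by linarith, hzj⟩
      exact le_trans (Set.encard_mono hsub) (Set.encard_le_one_iff.2 (fun a b ha hb => hminus ha hb))
end

section
/- Let S = {(x_i, y_i)}_{i=1}^n ⊆ ℝ × {−1,1} be a dataset with x_1 < x_2 < … < x_n, and suppose θ = (w, b, v) satisfies the KKT conditions of the maximum-margin problem for a width-k depth-2 ReLU network on S. Let 1 ≤ a < b ≤ n be such that x_b > x_a ≥ 0 and y_i = 1 for all a ≤ i ≤ b. Then in the interval [x_a, x_b] the network N_θ has at most two activation points at which the derivative of N_θ decreases. -/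
/-!
At a point where the derivative of `N_θ` decreases, some neuron `j` with `v j < 0` and
`w j ≠ 0` has its kink. The KKT stationarity conditions give
`w j * s + b j = v j * ∑ i, λ i * y i * σ i j * (1 + s * x i)`. Suppose two such neurons `p`, `q`
with the same orientation (`w p * w q > 0`) had distinct kinks `tp`, `tq` in `[x a, x c]`, say
with `tp` in the inactive region of `q`. Evaluating the dual sums at `tp`, that of `p` vanishes
and that of `q` is positive. But the two activation patterns differ only at data points between
the kinks, where `y i = 1`, `x i ≥ 0` and `σ i q ≤ σ i p`, so the sum of `q` is at most that of
`p`. Hence each of the two orientations contributes at most one point.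
-/

open Finset

open Filter Topology

noncomputable def NNetSlope {k : ℕ} (w b v : Fin k → ℝ) (z : ℝ) : ℝ :=
  ∑ j : Fin k, v j * if 0 < w j * z + b j then w j else 0

lemma hasDerivAt_relu_affine {w b z : ℝ} (h : w ≠ 0 → w * z + b ≠ 0) :
    HasDerivAt (fun x => relu (w * x + b)) (if 0 < w * z + b then w else 0) z := by
  by_cases hw : w = 0
  · subst hw
    simpa using hasDerivAt_const z (relu b)
  have hu : HasDerivAt (fun x => w * x + b) w z := by
    simpa using ((hasDerivAt_id z).const_mul w).add_const b
  have hu_cont : Tendsto (fun x => w * x + b) (𝓝 z) (𝓝 (w * z + b)) := hu.continuousAt.tendsto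
  rcases (h hw).lt_or_gt with hneg | hpos
  · rw [if_neg hneg.not_gt]
    refine (hasDerivAt_const z 0).congr_of_eventuallyEq ?_
    filter_upwards [hu_cont.eventually_lt_const hneg] with x hx
    exact max_eq_left hx.le
  · rw [if_pos hpos]
    refine hu.congr_of_eventuallyEq ?_
    filter_upwards [hu_cont.eventually_const_lt hpos] with x hx
    exact max_eq_right hx.le

lemma hasDerivAt_NNet {k : ℕ} {w b v : Fin k → ℝ} {z : ℝ}
    (h : ∀ j, w j ≠ 0 → w j * z + b j ≠ 0) :
    HasDerivAt (NNet w b v) (NNetSlope w b v z) z :=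
  HasDerivAt.fun_sum fun j _ => (hasDerivAt_relu_affine (h j)).const_mul (v j)

lemma eventually_relu_affine_jump (w b t : ℝ) :
    ∀ᶠ ε in 𝓝[>] (0 : ℝ), (w ≠ 0 → w * (t + ε) + b ≠ 0 ∧ w * (t - ε) + b ≠ 0) ∧
      (if 0 < w * (t + ε) + b then w else 0) - (if 0 < w * (t - ε) + b then w else 0) =
        if w * t + b = 0 then |w| else 0 := by
  have tendsto_shift : ∀ s : ℝ, Tendsto (fun ε => w * (t + s * ε) + b) (𝓝[>] 0) (𝓝 (w * t + b)) :=
    fun s => tendsto_nhdsWithin_of_tendsto_nhds <| by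
      simpa using (Continuous.tendsto (by fun_prop : Continuous fun ε : ℝ => w * (t + s * ε) + b) 0)
  rcases lt_trichotomy (w * t + b) 0 with hneg | hzero | hpos
  · filter_upwards [(tendsto_shift 1).eventually_lt_const hneg,
      (tendsto_shift (-1)).eventually_lt_const hneg] with ε hplus hminus
    simp only [one_mul, neg_one_mul, ← sub_eq_add_neg] at hplus hminus
    simp [hplus.ne, hminus.ne, hplus.not_gt, hminus.not_gt, hneg.ne]
  · filter_upwards [self_mem_nhdsWithin] with ε (hε : 0 < ε)
    have hplus : w * (t + ε) + b = w * ε := by linear_combination hzero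
    have hminus : w * (t - ε) + b = -(w * ε) := by linear_combination hzero
    rw [hplus, hminus, if_pos hzero]
    rcases lt_trichotomy w 0 with hw | hw | hw
    · have : w * ε < 0 := mul_neg_of_neg_of_pos hw hε
      simp [this.ne, this.not_gt, this, abs_of_neg hw]
    · simp [hw]
    · have : 0 < w * ε := mul_pos hw hε
      simp [this.ne', this, this.not_gt, abs_of_pos hw]
  · filter_upwards [(tendsto_shift 1).eventually_const_lt hpos,
      (tendsto_shift (-1)).eventually_const_lt hpos] with ε hplus hminus
    simp only [one_mul, neg_one_mul, ← sub_eq_add_neg] at hplus hminus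
    simp [hplus.ne', hminus.ne', hplus, hminus, hpos.ne']

lemma eventually_NNet_slope_jump {k : ℕ} (w b v : Fin k → ℝ) (t : ℝ) :
    ∀ᶠ ε in 𝓝[>] (0 : ℝ), HasDerivAt (NNet w b v) (NNetSlope w b v (t + ε)) (t + ε) ∧
      HasDerivAt (NNet w b v) (NNetSlope w b v (t - ε)) (t - ε) ∧
      NNetSlope w b v (t + ε) - NNetSlope w b v (t - ε) =
        ∑ j, if w j * t + b j = 0 then v j * |w j| else 0 := by
  filter_upwards [eventually_all.2 fun j => eventually_relu_affine_jump (w j) (b j) t] with ε hε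
  refine ⟨hasDerivAt_NNet fun j hj => ((hε j).1 hj).1,
    hasDerivAt_NNet fun j hj => ((hε j).1 hj).2, ?_⟩
  rw [NNetSlope, NNetSlope, ← sum_sub_distrib]
  refine sum_congr rfl fun j _ => ?_
  rw [← mul_sub, (hε j).2]
  split_ifs <;> simp

lemma exists_neg_neuron_of_derivDecreasesAt {k : ℕ} {w b v : Fin k → ℝ} {t : ℝ}
    (hD : DerivDecreasesAt (NNet w b v) t) : ∃ j, v j < 0 ∧ w j ≠ 0 ∧ w j * t + b j = 0 := by
  obtain ⟨ε₀, hε₀, hdec⟩ := hD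
  obtain ⟨ε, ⟨hdplus, hdminus, hjump⟩, hε, hεε₀⟩ := ((eventually_NNet_slope_jump w b v t).and
    (eventually_mem_nhdsWithin.and (nhdsWithin_le_nhds (gt_mem_nhds hε₀)))).exists
  have hneg : ∑ j, (if w j * t + b j = 0 then v j * |w j| else 0) < 0 := by
    have := hdec ε hε hεε₀
    rw [hdplus.deriv, hdminus.deriv] at this
    linarith
  by_contra! hcon
  refine hneg.not_ge (sum_nonneg fun j _ => ?_)
  split_ifs with hkink
  · by_cases hw : w j = 0
    · simp [hw]
    · exact mul_nonneg (le_of_not_gt fun hv => hcon j hv hw hkink) (abs_nonneg _)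
  · exact le_rfl

structure KKTStationary {n k : ℕ} (x y : Fin n → ℝ) (w b v : Fin k → ℝ) (lam : Fin n → ℝ)
    (sg : Fin n → Fin k → ℝ) : Prop where
  lam_nonneg : ∀ i, 0 ≤ lam i
  sg_mem : ∀ i j, sg i j ∈ Set.Icc (0 : ℝ) 1
  sg_eq_one : ∀ i j, 0 < w j * x i + b j → sg i j = 1
  sg_eq_zero : ∀ i j, w j * x i + b j < 0 → sg i j = 0
  w_eq : ∀ j, v j ≠ 0 → w j = ∑ i, lam i * y i * v j * sg i j * x i
  b_eq : ∀ j, v j ≠ 0 → b j = ∑ i, lam i * y i * v j * sg i j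

lemma IsKKT.exists_kktStationary {n k : ℕ} {x y : Fin n → ℝ} {w b v : Fin k → ℝ}
    (h : IsKKT x y w b v) : ∃ lam sg, KKTStationary x y w b v lam sg := by
  obtain ⟨-, lam, sg, hlam, hsg, hsg1, hsg0, -, hw, hb⟩ := h
  exact ⟨lam, sg, hlam, hsg, hsg1, hsg0, hw, hb⟩

def dualPreactivation {n k : ℕ} (x y lam : Fin n → ℝ) (sg : Fin n → Fin k → ℝ) (j : Fin k)
    (s : ℝ) : ℝ :=
  ∑ i, lam i * y i * sg i j * (1 + s * x i)

lemma dualPreactivation_le {n k : ℕ} {x y lam : Fin n → ℝ} {sg : Fin n → Fin k → ℝ} {p q : Fin k}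
    {s : ℝ} (hlam : ∀ i, 0 ≤ lam i) (hs : 0 ≤ s)
    (h : ∀ i, sg i p = sg i q ∨ (y i = 1 ∧ 0 ≤ x i ∧ sg i q ≤ sg i p)) :
    dualPreactivation x y lam sg q s ≤ dualPreactivation x y lam sg p s := by
  refine sum_le_sum fun i _ => ?_
  rcases h i with heq | ⟨hy, hx, hle⟩
  · rw [heq]
  · rw [hy, mul_one]
    have := hlam i
    gcongr

namespace KKTStationary

variable {n k : ℕ} {x y : Fin n → ℝ} {w b v : Fin k → ℝ} {lam : Fin n → ℝ}
  {sg : Fin n → Fin k → ℝ}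

lemma preact_eq (h : KKTStationary x y w b v lam sg) {j : Fin k} (hv : v j ≠ 0) (s : ℝ) :
    w j * s + b j = v j * dualPreactivation x y lam sg j s := by
  rw [h.w_eq j hv, h.b_eq j hv, dualPreactivation, sum_mul, mul_sum, ← sum_add_distrib]
  exact sum_congr rfl fun i _ => by ring

lemma sg_eq_or_le (h : KKTStationary x y w b v lam sg) {p q : Fin k} {tp tq : ℝ}
    (hw : 0 < w p * w q) (hp : w p * tp + b p = 0) (hq : w q * tq + b q = 0)
    (hqp : w q * tp + b q < 0) (i : Fin n) :
    sg i p = sg i q ∨ (x i ∈ Set.uIcc tp tq ∧ sg i q ≤ sg i p) := by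
  have hup : w p * x i + b p = w p * (x i - tp) := by linear_combination hp
  have huq : w q * x i + b q = w q * (x i - tq) := by linear_combination hq
  have hqp' : w q * (tp - tq) < 0 := by linear_combination hqp - hq
  by_cases hi : x i ∈ Set.uIcc tp tq
  · refine .inr ⟨hi, ?_⟩
    rw [Set.mem_uIcc] at hi
    by_cases hxq : x i = tq
    · have : 0 < w p * x i + b p := by
        have hne : tq ≠ tp := by rintro rfl; simp at hqp'
        have : 0 < w p * w q * (tq - tp) ^ 2 := mul_pos hw (sq_pos_of_ne_zero (sub_ne_zero.2 hne))
        rw [hup, hxq]; nlinarith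
      rw [h.sg_eq_one i p this]
      exact (h.sg_mem i q).2
    · have : w q * x i + b q < 0 := by
        rw [huq]
        rcases hi with ⟨h₁, h₂⟩ | ⟨h₁, h₂⟩
        · have hlt : x i < tq := lt_of_le_of_ne h₂ hxq
          have : 0 < w q := by nlinarith
          nlinarith
        · have hlt : tq < x i := lt_of_le_of_ne h₁ (Ne.symm hxq)
          have : w q < 0 := by nlinarith
          nlinarith
      rw [h.sg_eq_zero i q this]
      exact (h.sg_mem i p).1
  · refine .inl ?_
    have hout : 0 < (x i - tp) * (x i - tq) := by
      simp only [Set.mem_uIcc, not_or, not_and, not_le] at hi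
      rcases le_or_gt tp (x i) with h₁ | h₁
      · have h₂ := hi.1 h₁
        exact mul_pos (sub_pos.2 (hi.2 h₂.le)) (sub_pos.2 h₂)
      · have h₂ : x i < tq := lt_of_not_ge fun h₂ => (hi.2 h₂).not_gt h₁
        exact mul_pos_of_neg_of_neg (sub_neg.2 h₁) (sub_neg.2 h₂)
    have : 0 < (w p * x i + b p) * (w q * x i + b q) := by
      rw [hup, huq]
      nlinarith
    rcases pos_and_pos_or_neg_and_neg_of_mul_pos this with ⟨hp', hq'⟩ | ⟨hp', hq'⟩
    · rw [h.sg_eq_one i p hp', h.sg_eq_one i q hq']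
    · rw [h.sg_eq_zero i p hp', h.sg_eq_zero i q hq']

lemma kink_eq (h : KKTStationary x y w b v lam sg) (hx : StrictMono x) {a c : Fin n}
    (ha : 0 ≤ x a) (hyac : ∀ i, a ≤ i → i ≤ c → y i = 1) {p q : Fin k} {tp tq : ℝ}
    (hvp : v p < 0) (hvq : v q < 0) (hw : 0 < w p * w q)
    (hp : w p * tp + b p = 0) (hq : w q * tq + b q = 0)
    (htp : tp ∈ Set.Icc (x a) (x c)) (htq : tq ∈ Set.Icc (x a) (x c)) : tp = tq := by
  by_contra hne
  -- Of two neurons with the same orientation, one is inactive at the kink of the other.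
  wlog hqp : w q * tp + b q < 0 generalizing p q tp tq
  · refine this hvq hvp (by rwa [mul_comm]) hq hp htq htp (Ne.symm hne) ?_
    have hqp' : 0 ≤ w q * (tp - tq) := by linarith [not_lt.1 hqp]
    have hsq : 0 < w p * w q * (tp - tq) ^ 2 := mul_pos hw (sq_pos_of_ne_zero (sub_ne_zero.2 hne))
    nlinarith
  have hdual_p : dualPreactivation x y lam sg p tp = 0 := by
    have := h.preact_eq hvp.ne tp
    rw [hp] at this
    exact (mul_eq_zero.1 this.symm).resolve_left hvp.ne
  have hdual_q : 0 < dualPreactivation x y lam sg q tp :=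
    pos_of_mul_neg_right (h.preact_eq hvq.ne tp ▸ hqp) hvq.le
  have hdual_le : dualPreactivation x y lam sg q tp ≤ dualPreactivation x y lam sg p tp := by
    refine dualPreactivation_le h.lam_nonneg (ha.trans htp.1) fun i => ?_
    refine (h.sg_eq_or_le hw hp hq hqp i).imp_right fun ⟨hi, hle⟩ => ?_
    have hi' := Set.uIcc_subset_Icc htp htq hi
    exact ⟨hyac i (hx.le_iff_le.1 hi'.1) (hx.le_iff_le.1 hi'.2), ha.trans hi'.1, hle⟩
  linarith

lemma subsingleton_kinks (h : KKTStationary x y w b v lam sg) (hx : StrictMono x) {a c : Fin n}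
    (ha : 0 ≤ x a) (hyac : ∀ i, a ≤ i → i ≤ c → y i = 1) (s : ℝ) :
    {z ∈ Set.Icc (x a) (x c) | ∃ j, v j < 0 ∧ 0 < s * w j ∧ w j * z + b j = 0}.Subsingleton := by
  rintro z ⟨hz, j, hvj, hsj, hzj⟩ z' ⟨hz', j', hvj', hsj', hzj'⟩
  have hs : 0 < s ^ 2 * (w j * w j') := by linarith [mul_pos hsj hsj']
  exact h.kink_eq hx ha hyac hvj hvj' (pos_of_mul_pos_right hs (sq_nonneg s)) hzj hzj' hz hz'

end KKTStationary

theorem stmt2_general {n k : ℕ} (x y : Fin n → ℝ)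
    (hx : StrictMono x)
    (w b v : Fin k → ℝ) (hKKT : IsKKT x y w b v)
    (a c : Fin n) (ha : 0 ≤ x a)
    (hyac : ∀ i, a ≤ i → i ≤ c → y i = 1) :
    {z ∈ Set.Icc (x a) (x c) |
      IsActivationPoint w b v z ∧ DerivDecreasesAt (NNet w b v) z}.encard ≤ 2 := by
  obtain ⟨lam, sg, h⟩ := hKKT.exists_kktStationary
  set kinks := fun s : ℝ =>
    {z ∈ Set.Icc (x a) (x c) | ∃ j, v j < 0 ∧ 0 < s * w j ∧ w j * z + b j = 0}
  have hsub : {z ∈ Set.Icc (x a) (x c) |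
      IsActivationPoint w b v z ∧ DerivDecreasesAt (NNet w b v) z} ⊆ kinks 1 ∪ kinks (-1) := by
    rintro z ⟨hz, -, hD⟩
    obtain ⟨j, hv, hw, hkink⟩ := exists_neg_neuron_of_derivDecreasesAt hD
    rcases hw.lt_or_gt with hw | hw
    · exact .inr ⟨hz, j, hv, by linarith, hkink⟩
    · exact .inl ⟨hz, j, hv, by linarith, hkink⟩
  have hone : ∀ s, (kinks s).encard ≤ 1 := fun s =>
    Set.encard_le_one_iff_subsingleton.2 (h.subsingleton_kinks hx ha hyac s)
  calc _ ≤ (kinks 1 ∪ kinks (-1)).encard := Set.encard_le_encard hsub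
    _ ≤ (kinks 1).encard + (kinks (-1)).encard := Set.encard_union_le _ _
    _ ≤ 1 + 1 := add_le_add (hone 1) (hone (-1))
    _ = 2 := by norm_num

/-- If `a < c`, `0 ≤ x_a < x_c`, and `y_i = 1` for all `a ≤ i ≤ c`, then in
`[x_a, x_c]` the network `N_θ` has at most two activation points at which its derivative
decreases. -/
theorem stmt2 {n k : ℕ} (x y : Fin n → ℝ)
    (hx : StrictMono x) (hy : ∀ i, y i = 1 ∨ y i = -1)
    (w b v : Fin k → ℝ) (hKKT : IsKKT x y w b v)
    (a c : Fin n) (hac : a < c) (ha : 0 ≤ x a) (hxac : x a < x c)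
    (hyac : ∀ i, a ≤ i → i ≤ c → y i = 1) :
    {z ∈ Set.Icc (x a) (x c) |
      IsActivationPoint w b v z ∧ DerivDecreasesAt (NNet w b v) z}.encard ≤ 2 :=
  stmt2_general x y hx w b v hKKT a c ha hyac
end

section
/- Let S = {(x_i, y_i)}_{i=1}^n ⊆ ℝ × {−1,1} be a dataset with x_1 < x_2 < … < x_n, and suppose θ = (w, b, v) satisfies the KKT conditions of the maximum-margin problem for a width-k depth-2 ReLU network on S. Let 1 ≤ a < b ≤ n be such that x_b > x_a ≥ 0 and y_i = 1 for all a ≤ i ≤ b, and let ℐ'_{a,b} = {i : a ≤ i ≤ b, y_i N_θ(x_i) = 1} be enumerated as i_1 < … < i_m. Then there are at most 2 indices ℓ ∈ [m−1] such that N_θ(x) > 1 for some x ∈ [x_{i_ℓ}, x_{i_{ℓ+1}}]. -/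
open Finset

lemma relu_add_relu_neg (t : ℝ) : max (0:ℝ) t + max 0 (-t) = |t| := by
  rcases le_total 0 t with h | h
  · rw [max_eq_right h, max_eq_left (neg_nonpos.2 h), abs_of_nonneg h]; ring
  · rw [max_eq_left h, max_eq_right (neg_nonneg.2 h), abs_of_nonpos h]; ring

lemma nnet_cont {k : ℕ} (w b v : Fin k → ℝ) : Continuous (NNet w b v) := by
  unfold NNet relu
  exact continuous_finset_sum _ fun j _ =>
    continuous_const.mul (continuous_const.max
      ((continuous_const.mul continuous_id).add continuous_const))

/-- On an interval with value 1 at endpoints and >1 inside, there is an interior maximum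
point `u` supporting a neuron with `v j < 0` whose breakpoint is `u`. -/
lemma exists_peak_neuron {k : ℕ} (w b v : Fin k → ℝ) {p q : ℝ} (hpq : p < q)
    (hfp : NNet w b v p = 1) (hfq : NNet w b v q = 1)
    {z : ℝ} (hz : z ∈ Set.Icc p q) (hfz : 1 < NNet w b v z) :
    ∃ (u : ℝ) (j : Fin k), p < u ∧ u < q ∧ 1 < NNet w b v u ∧
      v j < 0 ∧ w j ≠ 0 ∧ w j * u + b j = 0 := by
  classical
  have hcont := nnet_cont w b v
  obtain ⟨u₀, hu₀, hmax⟩ := isCompact_Icc.exists_isMaxOn ⟨z, hz⟩ hcont.continuousOn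
  set M := NNet w b v u₀ with hM
  have hM1 : 1 < M := lt_of_lt_of_le hfz (hmax hz)
  set T : Set ℝ := Set.Icc p q ∩ {t | NNet w b v t = M} with hT
  have hTne : T.Nonempty := ⟨u₀, hu₀, rfl⟩
  have hTclosed : IsClosed T := isClosed_Icc.inter (isClosed_eq hcont continuous_const)
  have hTcomp : IsCompact T := isCompact_Icc.of_isClosed_subset hTclosed Set.inter_subset_left
  set u := sSup T with hu
  have huT : u ∈ T := hTcomp.sSup_mem hTne
  have hfu : NNet w b v u = M := huT.2
  have hup : p < u := by
    rcases eq_or_lt_of_le huT.1.1 with h | h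
    · rw [← h] at hfu; rw [hfp] at hfu; linarith
    · exact h
  have huq : u < q := by
    rcases eq_or_lt_of_le huT.1.2 with h | h
    · rw [h] at hfu; rw [hfq] at hfu; linarith
    · exact h
  have hlt : ∀ t, u < t → t ≤ q → NNet w b v t < M := by
    intro t h1 h2
    have hmem : t ∈ Set.Icc p q := ⟨by linarith [huT.1.1], h2⟩
    have hle : NNet w b v t ≤ M := hmax hmem
    rcases lt_or_eq_of_le hle with h | h
    · exact h
    · exact absurd (le_csSup hTcomp.bddAbove ⟨hmem, h⟩) (not_le.2 h1)
  -- the finite set of neurons with breakpoint at u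
  set S : Finset (Fin k) :=
    univ.filter (fun j => v j ≠ 0 ∧ w j ≠ 0 ∧ w j * u + b j = 0) with hS
  -- for each neuron, local second-difference identity
  have hEach : ∀ j : Fin k, ∀ᶠ ε in nhdsWithin (0:ℝ) (Set.Ioi 0),
      v j * relu (w j * (u + ε) + b j) + v j * relu (w j * (u - ε) + b j)
        - 2 * (v j * relu (w j * u + b j))
      = if v j ≠ 0 ∧ w j ≠ 0 ∧ w j * u + b j = 0 then ε * (v j * |w j|) else 0 := by
    intro j
    by_cases hv : v j = 0
    · exact Filter.Eventually.of_forall fun ε => by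
        rw [if_neg (by tauto)]; simp [hv]
    by_cases hw : w j = 0
    · exact Filter.Eventually.of_forall fun ε => by
        rw [if_neg (by tauto)]; simp [hw]; ring
    have hwabs : 0 < |w j| := abs_pos.2 hw
    rcases lt_trichotomy (w j * u + b j) 0 with hneg | hzero | hpos
    · have hδ : Set.Ioo (0:ℝ) (-(w j * u + b j) / |w j|) ∈ nhdsWithin (0:ℝ) (Set.Ioi 0) :=
        Ioo_mem_nhdsGT_of_mem ⟨le_refl 0, div_pos (by linarith) hwabs⟩
      filter_upwards [hδ] with ε hε
      obtain ⟨hε0, hεδ⟩ := hε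
      have hwε : ε * |w j| < -(w j * u + b j) := (lt_div_iff₀ hwabs).1 hεδ
      have h1 : w j * (u + ε) + b j < 0 := by
        nlinarith [le_abs_self (w j), neg_abs_le (w j)]
      have h2 : w j * (u - ε) + b j < 0 := by
        nlinarith [le_abs_self (w j), neg_abs_le (w j)]
      rw [if_neg (by intro h; exact absurd h.2.2 (ne_of_lt hneg))]
      unfold relu
      rw [max_eq_left h1.le, max_eq_left h2.le, max_eq_left hneg.le]
      ring
    · filter_upwards [self_mem_nhdsWithin] with ε hε
      have hε0 : (0:ℝ) < ε := hε
      rw [if_pos ⟨hv, hw, hzero⟩]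
      have e1 : w j * (u + ε) + b j = w j * ε := by linear_combination hzero
      have e2 : w j * (u - ε) + b j = -(w j * ε) := by linear_combination hzero
      unfold relu
      rw [e1, e2, hzero]
      have := relu_add_relu_neg (w j * ε)
      have habs : |w j * ε| = |w j| * ε := by
        rw [abs_mul, abs_of_pos hε0]
      rw [max_self, mul_zero, ← mul_add, this, habs]
      ring
    · have hδ : Set.Ioo (0:ℝ) ((w j * u + b j) / |w j|) ∈ nhdsWithin (0:ℝ) (Set.Ioi 0) :=
        Ioo_mem_nhdsGT_of_mem ⟨le_refl 0, div_pos (by linarith) hwabs⟩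
      filter_upwards [hδ] with ε hε
      obtain ⟨hε0, hεδ⟩ := hε
      have hwε : ε * |w j| < w j * u + b j := (lt_div_iff₀ hwabs).1 hεδ
      have h1 : 0 < w j * (u + ε) + b j := by
        nlinarith [le_abs_self (w j), neg_abs_le (w j)]
      have h2 : 0 < w j * (u - ε) + b j := by
        nlinarith [le_abs_self (w j), neg_abs_le (w j)]
      rw [if_neg (by intro h; exact absurd h.2.2 (ne_of_gt hpos))]
      unfold relu
      rw [max_eq_right h1.le, max_eq_right h2.le, max_eq_right hpos.le]
      ring
  have hall := Filter.eventually_all.2 hEach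
  have hsmall : Set.Ioo (0:ℝ) (min (u - p) (q - u)) ∈ nhdsWithin (0:ℝ) (Set.Ioi 0) :=
    Ioo_mem_nhdsGT_of_mem ⟨le_refl 0, by simp [hup, huq, sub_pos]⟩
  obtain ⟨ε, hident, hε0, hεb⟩ := (hall.and hsmall).exists
  have hεp : ε < u - p := lt_of_lt_of_le hεb (min_le_left _ _)
  have hεq : ε < q - u := lt_of_lt_of_le hεb (min_le_right _ _)
  have hsum : NNet w b v (u + ε) + NNet w b v (u - ε) - 2 * NNet w b v u
      = ε * ∑ j ∈ S, v j * |w j| := by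
    unfold NNet
    rw [Finset.mul_sum, ← Finset.sum_add_distrib, ← Finset.sum_sub_distrib]
    rw [hS, Finset.sum_filter, Finset.mul_sum]
    refine Finset.sum_congr rfl fun j _ => ?_
    rw [hident j, mul_ite, mul_zero]
  have hplus : NNet w b v (u + ε) < M := hlt (u + ε) (by linarith) (by linarith)
  have hminus : NNet w b v (u - ε) ≤ M := hmax ⟨by linarith, by linarith⟩
  have hSneg : ∑ j ∈ S, v j * |w j| < 0 := by
    by_contra hc
    push_neg at hc
    nlinarith [hsum, hfu, mul_nonneg hε0.le hc]
  have hex : ∃ j ∈ S, v j * |w j| < 0 := by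
    by_contra hc
    push_neg at hc
    exact absurd (Finset.sum_nonneg hc) (not_le.2 hSneg)
  obtain ⟨j, hjS, hjneg⟩ := hex
  rw [hS, Finset.mem_filter] at hjS
  obtain ⟨-, hv, hw, hbp⟩ := hjS
  have hvneg : v j < 0 := by
    by_contra hc
    push_neg at hc
    exact absurd (mul_nonneg hc (abs_nonneg _)) (not_le.2 hjneg)
  exact ⟨u, j, hup, huq, by rw [hfu]; exact hM1, hvneg, hw, hbp⟩

section KKTpair

variable {n k : ℕ} {x y : Fin n → ℝ} {w b v : Fin k → ℝ}
  {lam : Fin n → ℝ} {sg : Fin n → Fin k → ℝ}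

lemma kkt_sum_eval (hw : ∀ j, v j ≠ 0 → w j = ∑ i, lam i * y i * v j * sg i j * x i)
    (hb : ∀ j, v j ≠ 0 → b j = ∑ i, lam i * y i * v j * sg i j)
    {j : Fin k} (hv : v j ≠ 0) (t : ℝ) :
    v j * (∑ i, lam i * y i * sg i j * (x i * t + 1)) = w j * t + b j := by
  rw [hw j hv, hb j hv, Finset.sum_mul, ← Finset.sum_add_distrib, Finset.mul_sum]
  exact Finset.sum_congr rfl fun i _ => by ring

lemma fx_le_one (hy : ∀ i, y i = 1 ∨ y i = -1)
    (hcomp : ∀ i, y i * NNet w b v (x i) ≠ 1 → lam i = 0)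
    {i : Fin n} (hpos : 0 < lam i) : NNet w b v (x i) ≤ 1 := by
  have hyf : y i * NNet w b v (x i) = 1 := by
    by_contra hne
    exact absurd (hcomp i hne) (ne_of_gt hpos)
  rcases hy i with h | h
  · rw [h, one_mul] at hyf; linarith
  · rw [h] at hyf; linarith

/-- No two distinct peaks both supported by negative neurons with positive `w`. -/
lemma no_two_plus (hlam : ∀ i, 0 ≤ lam i)
    (hsg1 : ∀ i j, 0 < w j * x i + b j → sg i j = 1)
    (hsg0 : ∀ i j, w j * x i + b j < 0 → sg i j = 0)
    (hcomp : ∀ i, y i * NNet w b v (x i) ≠ 1 → lam i = 0)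
    (hw : ∀ j, v j ≠ 0 → w j = ∑ i, lam i * y i * v j * sg i j * x i)
    (hb : ∀ j, v j ≠ 0 → b j = ∑ i, lam i * y i * v j * sg i j)
    (hy : ∀ i, y i = 1 ∨ y i = -1)
    {u u' : ℝ} (hu0 : 0 ≤ u) (huu' : u < u')
    (hmid : ∀ i, u < x i → x i < u' → y i = 1)
    {j j' : Fin k} (hvj : v j < 0) (hvj' : v j' < 0)
    (hwj : 0 < w j) (hwj' : 0 < w j')
    (hbp : w j * u + b j = 0) (hbp' : w j' * u' + b j' = 0)
    (hfu : 1 < NNet w b v u) (hfu' : 1 < NNet w b v u') : False := by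
  have hvj0 : v j ≠ 0 := ne_of_lt hvj
  have hvj'0 : v j' ≠ 0 := ne_of_lt hvj'
  have hS1 : ∑ i, lam i * y i * sg i j * (x i * u + 1) = 0 := by
    have h := kkt_sum_eval hw hb hvj0 u
    rw [hbp] at h
    exact (mul_eq_zero.1 h).resolve_left hvj0
  have hS2 : 0 < ∑ i, lam i * y i * sg i j' * (x i * u + 1) := by
    have h := kkt_sum_eval hw hb hvj'0 u
    have h2 : w j' * u + b j' = w j' * (u - u') := by linear_combination hbp'
    rw [h2] at h
    have hneg : v j' * (∑ i, lam i * y i * sg i j' * (x i * u + 1)) < 0 := by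
      rw [h]; exact mul_neg_of_pos_of_neg hwj' (by linarith)
    by_contra hc
    push_neg at hc
    nlinarith [hneg, hc, hvj'.le]
  have hterm : ∀ i ∈ univ, 0 ≤ lam i * y i * (sg i j - sg i j') * (x i * u + 1) := by
    intro i _
    rcases (hlam i).eq_or_lt with h0 | hpos
    · rw [← h0]; simp
    · have hfle := fx_le_one hy hcomp hpos
      have hxu : x i ≠ u := fun he => by rw [he] at hfle; linarith
      have hxu' : x i ≠ u' := fun he => by rw [he] at hfle; linarith
      rcases lt_or_gt_of_ne hxu with hlt | hgt
      · have e1 : sg i j = 0 := hsg0 i j (by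
          have : w j * x i + b j = w j * (x i - u) := by linear_combination hbp
          rw [this]; exact mul_neg_of_pos_of_neg hwj (by linarith))
        have e2 : sg i j' = 0 := hsg0 i j' (by
          have : w j' * x i + b j' = w j' * (x i - u') := by linear_combination hbp'
          rw [this]; exact mul_neg_of_pos_of_neg hwj' (by linarith))
        rw [e1, e2]; simp
      · rcases lt_trichotomy (x i) u' with hlt' | heq | hgt'
        · have e1 : sg i j = 1 := hsg1 i j (by
            have : w j * x i + b j = w j * (x i - u) := by linear_combination hbp
            rw [this]; exact mul_pos hwj (by linarith))
          have e2 : sg i j' = 0 := hsg0 i j' (by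
            have : w j' * x i + b j' = w j' * (x i - u') := by linear_combination hbp'
            rw [this]; exact mul_neg_of_pos_of_neg hwj' (by linarith))
          have hy1 : y i = 1 := hmid i hgt hlt'
          rw [e1, e2, hy1]
          have hco : 0 ≤ x i * u + 1 := by nlinarith
          nlinarith [mul_nonneg hpos.le hco]
        · exact absurd heq hxu'
        · have e1 : sg i j = 1 := hsg1 i j (by
            have : w j * x i + b j = w j * (x i - u) := by linear_combination hbp
            rw [this]; exact mul_pos hwj (by linarith))
          have e2 : sg i j' = 1 := hsg1 i j' (by
            have : w j' * x i + b j' = w j' * (x i - u') := by linear_combination hbp'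
            rw [this]; exact mul_pos hwj' (by linarith))
          rw [e1, e2]; simp
  have h0le : 0 ≤ ∑ i, lam i * y i * (sg i j - sg i j') * (x i * u + 1) :=
    Finset.sum_nonneg hterm
  have hsplit : ∑ i, lam i * y i * (sg i j - sg i j') * (x i * u + 1)
      = (∑ i, lam i * y i * sg i j * (x i * u + 1))
        - ∑ i, lam i * y i * sg i j' * (x i * u + 1) := by
    rw [← Finset.sum_sub_distrib]
    exact Finset.sum_congr rfl fun i _ => by ring
  rw [hsplit, hS1] at h0le
  linarith

/-- No two distinct peaks both supported by negative neurons with negative `w`. -/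
lemma no_two_minus (hlam : ∀ i, 0 ≤ lam i)
    (hsg1 : ∀ i j, 0 < w j * x i + b j → sg i j = 1)
    (hsg0 : ∀ i j, w j * x i + b j < 0 → sg i j = 0)
    (hcomp : ∀ i, y i * NNet w b v (x i) ≠ 1 → lam i = 0)
    (hw : ∀ j, v j ≠ 0 → w j = ∑ i, lam i * y i * v j * sg i j * x i)
    (hb : ∀ j, v j ≠ 0 → b j = ∑ i, lam i * y i * v j * sg i j)
    (hy : ∀ i, y i = 1 ∨ y i = -1)
    {u u' : ℝ} (hu0 : 0 ≤ u) (huu' : u < u')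
    (hmid : ∀ i, u < x i → x i < u' → y i = 1)
    {j j' : Fin k} (hvj : v j < 0) (hvj' : v j' < 0)
    (hwj : w j < 0) (hwj' : w j' < 0)
    (hbp : w j * u + b j = 0) (hbp' : w j' * u' + b j' = 0)
    (hfu : 1 < NNet w b v u) (hfu' : 1 < NNet w b v u') : False := by
  have hvj0 : v j ≠ 0 := ne_of_lt hvj
  have hvj'0 : v j' ≠ 0 := ne_of_lt hvj'
  have hS2 : ∑ i, lam i * y i * sg i j' * (x i * u' + 1) = 0 := by
    have h := kkt_sum_eval hw hb hvj'0 u'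
    rw [hbp'] at h
    exact (mul_eq_zero.1 h).resolve_left hvj'0
  have hS1 : 0 < ∑ i, lam i * y i * sg i j * (x i * u' + 1) := by
    have h := kkt_sum_eval hw hb hvj0 u'
    have h2 : w j * u' + b j = w j * (u' - u) := by linear_combination hbp
    rw [h2] at h
    have hneg : v j * (∑ i, lam i * y i * sg i j * (x i * u' + 1)) < 0 := by
      rw [h]; exact mul_neg_of_neg_of_pos hwj (by linarith)
    by_contra hc
    push_neg at hc
    nlinarith [hneg, hc, hvj.le]
  have hterm : ∀ i ∈ univ, 0 ≤ lam i * y i * (sg i j' - sg i j) * (x i * u' + 1) := by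
    intro i _
    rcases (hlam i).eq_or_lt with h0 | hpos
    · rw [← h0]; simp
    · have hfle := fx_le_one hy hcomp hpos
      have hxu : x i ≠ u := fun he => by rw [he] at hfle; linarith
      have hxu' : x i ≠ u' := fun he => by rw [he] at hfle; linarith
      rcases lt_or_gt_of_ne hxu with hlt | hgt
      · have e1 : sg i j = 1 := hsg1 i j (by
          have : w j * x i + b j = w j * (x i - u) := by linear_combination hbp
          rw [this]; exact mul_pos_of_neg_of_neg hwj (by linarith))
        have e2 : sg i j' = 1 := hsg1 i j' (by
          have : w j' * x i + b j' = w j' * (x i - u') := by linear_combination hbp'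
          rw [this]; exact mul_pos_of_neg_of_neg hwj' (by linarith))
        rw [e1, e2]; simp
      · rcases lt_trichotomy (x i) u' with hlt' | heq | hgt'
        · have e1 : sg i j = 0 := hsg0 i j (by
            have : w j * x i + b j = w j * (x i - u) := by linear_combination hbp
            rw [this]; exact mul_neg_of_neg_of_pos hwj (by linarith))
          have e2 : sg i j' = 1 := hsg1 i j' (by
            have : w j' * x i + b j' = w j' * (x i - u') := by linear_combination hbp'
            rw [this]; exact mul_pos_of_neg_of_neg hwj' (by linarith))
          have hy1 : y i = 1 := hmid i hgt hlt'
          rw [e1, e2, hy1]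
          have hco : 0 ≤ x i * u' + 1 := by nlinarith
          nlinarith [mul_nonneg hpos.le hco]
        · exact absurd heq hxu'
        · have e1 : sg i j = 0 := hsg0 i j (by
            have : w j * x i + b j = w j * (x i - u) := by linear_combination hbp
            rw [this]; exact mul_neg_of_neg_of_pos hwj (by linarith))
          have e2 : sg i j' = 0 := hsg0 i j' (by
            have : w j' * x i + b j' = w j' * (x i - u') := by linear_combination hbp'
            rw [this]; exact mul_neg_of_neg_of_pos hwj' (by linarith))
          rw [e1, e2]; simp
  have h0le : 0 ≤ ∑ i, lam i * y i * (sg i j' - sg i j) * (x i * u' + 1) :=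
    Finset.sum_nonneg hterm
  have hsplit : ∑ i, lam i * y i * (sg i j' - sg i j) * (x i * u' + 1)
      = (∑ i, lam i * y i * sg i j' * (x i * u' + 1))
        - ∑ i, lam i * y i * sg i j * (x i * u' + 1) := by
    rw [← Finset.sum_sub_distrib]
    exact Finset.sum_congr rfl fun i _ => by ring
  rw [hsplit, hS2] at h0le
  linarith

end KKTpair

/-- With `ℐ'_{a,c} = {i : a ≤ i ≤ c, y_i N_θ(x_i) = 1}` enumerated by the
strictly monotone `idx : Fin m → Fin n`, there are at most `2` indices `ℓ` such that
`N_θ(z) > 1` for some `z ∈ [x_{i_ℓ}, x_{i_{ℓ+1}}]`. -/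
theorem stmt3 {n k : ℕ} (x y : Fin n → ℝ)
    (hx : StrictMono x) (hy : ∀ i, y i = 1 ∨ y i = -1)
    (w b v : Fin k → ℝ) (hKKT : IsKKT x y w b v)
    (a c : Fin n) (hac : a < c) (ha : 0 ≤ x a) (hxac : x a < x c)
    (hyac : ∀ i, a ≤ i → i ≤ c → y i = 1)
    (m : ℕ) (idx : Fin m → Fin n) (hmono : StrictMono idx)
    (hrange : ∀ i : Fin n,
      (a ≤ i ∧ i ≤ c ∧ y i * NNet w b v (x i) = 1) ↔ i ∈ Set.range idx) :
    {ℓ : ℕ | ∃ h : ℓ + 1 < m,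
      ∃ z ∈ Set.Icc (x (idx ⟨ℓ, Nat.lt_of_succ_lt h⟩)) (x (idx ⟨ℓ + 1, h⟩)),
        1 < NNet w b v z}.encard ≤ 2 := by
  classical
  obtain ⟨hfeas, lam, sg, hlam, hsgI, hsg1, hsg0, hcomp, hw, hb⟩ := hKKT
  set E : Set ℕ := {ℓ : ℕ | ∃ h : ℓ + 1 < m,
      ∃ z ∈ Set.Icc (x (idx ⟨ℓ, Nat.lt_of_succ_lt h⟩)) (x (idx ⟨ℓ + 1, h⟩)),
        1 < NNet w b v z} with hE
  have hidx : ∀ ℓ : Fin m, a ≤ idx ℓ ∧ idx ℓ ≤ c ∧ NNet w b v (x (idx ℓ)) = 1 := by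
    intro ℓ
    obtain ⟨h1, h2, h3⟩ := (hrange (idx ℓ)).mpr ⟨ℓ, rfl⟩
    rw [hyac _ h1 h2, one_mul] at h3
    exact ⟨h1, h2, h3⟩
  have hpk : ∀ ℓ ∈ E, ∃ (h : ℓ + 1 < m) (u : ℝ) (j : Fin k),
      x (idx ⟨ℓ, Nat.lt_of_succ_lt h⟩) < u ∧ u < x (idx ⟨ℓ + 1, h⟩) ∧
      1 < NNet w b v u ∧ v j < 0 ∧ w j ≠ 0 ∧ w j * u + b j = 0 := by
    intro ℓ hℓ
    obtain ⟨h, z, hzmem, hzgt⟩ := hℓ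
    have hlt : (⟨ℓ, Nat.lt_of_succ_lt h⟩ : Fin m) < ⟨ℓ + 1, h⟩ := by
      simp [Fin.lt_def]
    have hpq : x (idx ⟨ℓ, Nat.lt_of_succ_lt h⟩) < x (idx ⟨ℓ + 1, h⟩) := hx (hmono hlt)
    obtain ⟨u, j, h1, h2, h3, h4, h5, h6⟩ :=
      exists_peak_neuron w b v hpq (hidx _).2.2 (hidx _).2.2 hzmem hzgt
    exact ⟨h, u, j, h1, h2, h3, h4, h5, h6⟩
  have hPLUS : ∀ (u u' : ℝ) (j j' : Fin k), x a < u → u < u' → u' < x c →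
      1 < NNet w b v u → 1 < NNet w b v u' → v j < 0 → v j' < 0 → 0 < w j → 0 < w j' →
      w j * u + b j = 0 → w j' * u' + b j' = 0 → False := by
    intro u u' j j' hau huu' hu'c hfu hfu' hvj hvj' hwj hwj' hbp hbp'
    refine no_two_plus hlam hsg1 hsg0 hcomp hw hb hy (le_trans ha hau.le) huu' ?_
      hvj hvj' hwj hwj' hbp hbp' hfu hfu'
    intro i hi1 hi2
    exact hyac i (hx.lt_iff_lt.mp (lt_trans hau hi1)).le
      (hx.lt_iff_lt.mp (lt_trans hi2 hu'c)).le
  have hMINUS : ∀ (u u' : ℝ) (j j' : Fin k), x a < u → u < u' → u' < x c →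
      1 < NNet w b v u → 1 < NNet w b v u' → v j < 0 → v j' < 0 → w j < 0 → w j' < 0 →
      w j * u + b j = 0 → w j' * u' + b j' = 0 → False := by
    intro u u' j j' hau huu' hu'c hfu hfu' hvj hvj' hwj hwj' hbp hbp'
    refine no_two_minus hlam hsg1 hsg0 hcomp hw hb hy (le_trans ha hau.le) huu' ?_
      hvj hvj' hwj hwj' hbp hbp' hfu hfu'
    intro i hi1 hi2
    exact hyac i (hx.lt_iff_lt.mp (lt_trans hau hi1)).le
      (hx.lt_iff_lt.mp (lt_trans hi2 hu'c)).le
  have key3 : ∀ ℓ₁ ℓ₂ ℓ₃ : ℕ, ℓ₁ ∈ E → ℓ₂ ∈ E → ℓ₃ ∈ E → ℓ₁ < ℓ₂ → ℓ₂ < ℓ₃ → False := by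
    intro ℓ₁ ℓ₂ ℓ₃ h1 h2 h3 h12 h23
    obtain ⟨hm1, u1, j1, hu1l, hu1r, hfu1, hv1, hw1, hb1⟩ := hpk ℓ₁ h1
    obtain ⟨hm2, u2, j2, hu2l, hu2r, hfu2, hv2, hw2, hb2⟩ := hpk ℓ₂ h2
    obtain ⟨hm3, u3, j3, hu3l, hu3r, hfu3, hv3, hw3, hb3⟩ := hpk ℓ₃ h3
    have horder : ∀ (ℓa ℓb : ℕ) (ha' : ℓa + 1 < m) (hb' : ℓb + 1 < m), ℓa < ℓb →
        x (idx ⟨ℓa + 1, ha'⟩) ≤ x (idx ⟨ℓb, Nat.lt_of_succ_lt hb'⟩) := by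
      intro ℓa ℓb ha' hb' hab
      exact hx.monotone (hmono.monotone (by simp only [Fin.mk_le_mk]; omega))
    have h12u : u1 < u2 :=
      lt_of_lt_of_le hu1r (le_trans (horder _ _ hm1 hm2 h12) hu2l.le)
    have h23u : u2 < u3 :=
      lt_of_lt_of_le hu2r (le_trans (horder _ _ hm2 hm3 h23) hu3l.le)
    have h13u : u1 < u3 := lt_trans h12u h23u
    have hxa1 : x a < u1 := lt_of_le_of_lt (hx.monotone (hidx _).1) hu1l
    have hxa2 : x a < u2 := lt_of_le_of_lt (hx.monotone (hidx _).1) hu2l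
    have hxc2 : u2 < x c := lt_of_lt_of_le hu2r (hx.monotone (hidx _).2.1)
    have hxc3 : u3 < x c := lt_of_lt_of_le hu3r (hx.monotone (hidx _).2.1)
    rcases lt_or_gt_of_ne hw1 with hs1 | hs1 <;>
      rcases lt_or_gt_of_ne hw2 with hs2 | hs2 <;>
        rcases lt_or_gt_of_ne hw3 with hs3 | hs3
    · exact hMINUS u1 u2 j1 j2 hxa1 h12u hxc2 hfu1 hfu2 hv1 hv2 hs1 hs2 hb1 hb2
    · exact hMINUS u1 u2 j1 j2 hxa1 h12u hxc2 hfu1 hfu2 hv1 hv2 hs1 hs2 hb1 hb2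
    · exact hMINUS u1 u3 j1 j3 hxa1 h13u hxc3 hfu1 hfu3 hv1 hv3 hs1 hs3 hb1 hb3
    · exact hPLUS u2 u3 j2 j3 hxa2 h23u hxc3 hfu2 hfu3 hv2 hv3 hs2 hs3 hb2 hb3
    · exact hMINUS u2 u3 j2 j3 hxa2 h23u hxc3 hfu2 hfu3 hv2 hv3 hs2 hs3 hb2 hb3
    · exact hPLUS u1 u3 j1 j3 hxa1 h13u hxc3 hfu1 hfu3 hv1 hv3 hs1 hs3 hb1 hb3
    · exact hPLUS u1 u2 j1 j2 hxa1 h12u hxc2 hfu1 hfu2 hv1 hv2 hs1 hs2 hb1 hb2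
    · exact hPLUS u1 u2 j1 j2 hxa1 h12u hxc2 hfu1 hfu2 hv1 hv2 hs1 hs2 hb1 hb2
  by_cases h2 : ∃ p q, p ∈ E ∧ q ∈ E ∧ p ≠ q
  · obtain ⟨p, q, hp, hq, hpq⟩ := h2
    have hsub : E ⊆ {p, q} := by
      intro r hr
      by_contra hr'
      simp only [Set.mem_insert_iff, Set.mem_singleton_iff] at hr'
      push_neg at hr'
      obtain ⟨hrp, hrq⟩ := hr'
      rcases Nat.lt_trichotomy p q with h | h | h
      · rcases Nat.lt_trichotomy q r with h' | h' | h'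
        · exact key3 p q r hp hq hr h h'
        · exact hrq h'.symm
        · rcases Nat.lt_trichotomy p r with h'' | h'' | h''
          · exact key3 p r q hp hr hq h'' h'
          · exact hrp h''.symm
          · exact key3 r p q hr hp hq h'' h
      · exact hpq h
      · rcases Nat.lt_trichotomy p r with h' | h' | h'
        · exact key3 q p r hq hp hr h h'
        · exact hrp h'.symm
        · rcases Nat.lt_trichotomy q r with h'' | h'' | h''
          · exact key3 q r p hq hr hp h'' h'
          · exact hrq h''.symm
          · exact key3 r q p hr hq hp h'' h
    calc E.encard ≤ ({p, q} : Set ℕ).encard := Set.encard_le_encard hsub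
      _ = 2 := Set.encard_pair hpq
  · push_neg at h2
    refine le_trans (Set.encard_le_one_iff.mpr ?_) (by norm_num)
    intro p q hp hq
    exact h2 p q hp hq
end

section
/- Let S = {(x_i, y_i)}_{i=1}^n ⊆ ℝ × {−1,1} be a dataset with x_1 < x_2 < … < x_n, and suppose θ = (w, b, v) satisfies the KKT conditions of the maximum-margin problem for a width-k depth-2 ReLU network on S. Let 1 ≤ a < b ≤ n be such that x_b > x_a ≥ 0 and y_i = 1 for all a ≤ i ≤ b, and let ℐ'_{a,b} = {i : a ≤ i ≤ b, y_i N_θ(x_i) = 1} be enumerated as i_1 < … < i_m. Then there are at most 5 indices ℓ ∈ [m−1] such that N_θ(x) < 1 for some x ∈ [x_{i_ℓ}, x_{i_{ℓ+1}}]. -/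
open Finset

/-!
Between two points where `N_θ < 1` that lie on either side of a margin point (`N_θ = 1`), the
network is not convex, so some neuron with negative output weight has its kink strictly in
between. Four dips therefore produce three such kinks `0 ≤ t₀ < t₁ < t₂`, two of which belong to
neurons whose slopes have the same sign. For two such neurons `j, j'` with kinks `t < t'` and
positive slopes, subtracting the stationarity equations `∑ᵢ λᵢ yᵢ σᵢⱼ (t xᵢ + 1) = 0` leaves a
sum over the data in `[t, t']`, which is nonnegative because all labels there are `1`, plus
`(t - t') ∑ᵢ λᵢ yᵢ σᵢⱼ' xᵢ`, which is positive because `w_j' > 0 > v_j'`. Negative slopes reduce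
to positive ones by reflecting `x ↦ -x`. So there are in fact at most three dips.
-/

open Set

theorem ConvexOn.sum {𝕜 E β ι : Type*} [Semiring 𝕜] [PartialOrder 𝕜] [AddCommMonoid E]
    [AddCommMonoid β] [PartialOrder β] [IsOrderedAddMonoid β] [SMul 𝕜 E] [Module 𝕜 β]
    {s : Set E} {t : Finset ι} {f : ι → E → β} (hs : Convex 𝕜 s)
    (hf : ∀ i ∈ t, ConvexOn 𝕜 s (f i)) : ConvexOn 𝕜 s (∑ i ∈ t, f i) :=
  Finset.sum_induction f (ConvexOn 𝕜 s) (fun _ _ => ConvexOn.add) (convexOn_const 0 hs) hf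

theorem ContinuousOn.forall_nonneg_or_forall_nonpos {f : ℝ → ℝ} {z z' : ℝ}
    (hf : ContinuousOn f (Icc z z')) (h : ∀ t ∈ Ioo z z', f t ≠ 0) :
    (∀ u ∈ Icc z z', 0 ≤ f u) ∨ (∀ u ∈ Icc z z', f u ≤ 0) := by
  by_contra! ⟨⟨u, hu, hfu⟩, ⟨u', hu', hfu'⟩⟩
  rcases le_total u u' with huu' | hu'u
  · obtain ⟨t, ht, hft⟩ :=
      intermediate_value_Ioo huu' (hf.mono (Icc_subset_Icc hu.1 hu'.2)) ⟨hfu, hfu'⟩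
    exact h t ⟨hu.1.trans_lt ht.1, ht.2.trans_le hu'.2⟩ hft
  · obtain ⟨t, ht, hft⟩ :=
      intermediate_value_Ioo' hu'u (hf.mono (Icc_subset_Icc hu'.1 hu.2)) ⟨hfu, hfu'⟩
    exact h t ⟨hu'.1.trans_lt ht.1, ht.2.trans_le hu.2⟩ hft

theorem convexOn_affine {s : Set ℝ} (hs : Convex ℝ s) (c d : ℝ) :
    ConvexOn ℝ s fun u => c * u + d :=
  ((LinearMap.mulLeft ℝ c).convexOn hs).add_const d

theorem convexOn_mul_relu_affine_s4 {s : Set ℝ} (hs : Convex ℝ s) {v : ℝ} (hv : 0 ≤ v) (w b : ℝ) :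
    ConvexOn ℝ s fun u => v * relu (w * u + b) :=
  ((convexOn_const 0 hs).sup (convexOn_affine hs w b)).smul hv

theorem convexOn_mul_relu_affine_Icc {z z' w b : ℝ} (v : ℝ)
    (hkink : w ≠ 0 → ∀ t ∈ Ioo z z', w * t + b ≠ 0) :
    ConvexOn ℝ (Icc z z') fun u => v * relu (w * u + b) := by
  by_cases hw : w = 0
  · simpa [hw] using convexOn_const (v * relu b) (convex_Icc z z')
  rcases (Continuous.continuousOn (by fun_prop)).forall_nonneg_or_forall_nonpos
    (hkink hw) with hnonneg | hnonpos
  · refine (convexOn_affine (convex_Icc z z') (v * w) (v * b)).congr fun u hu => ?_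
    simp only [relu, max_eq_right (hnonneg u hu)]
    ring
  · refine (convexOn_const 0 (convex_Icc z z')).congr fun u hu => ?_
    simp only [relu, max_eq_left (hnonpos u hu), mul_zero]

theorem convexOn_NNet_Icc {k : ℕ} {w b v : Fin k → ℝ} {z z' : ℝ}
    (hkink : ∀ j, v j < 0 → w j ≠ 0 → ∀ t ∈ Ioo z z', w j * t + b j ≠ 0) :
    ConvexOn ℝ (Icc z z') (NNet w b v) := by
  have hneuron : ∀ j ∈ Finset.univ,
      ConvexOn ℝ (Icc z z') fun u => v j * relu (w j * u + b j) := by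
    intro j _
    rcases le_or_gt 0 (v j) with hv | hv
    · exact convexOn_mul_relu_affine_s4 (convex_Icc z z') hv (w j) (b j)
    · exact convexOn_mul_relu_affine_Icc (v j) (hkink j hv)
  refine (ConvexOn.sum (convex_Icc z z') hneuron).congr fun u _ => ?_
  simp only [NNet, Finset.sum_apply]

def IsNegActivationPoint {k : ℕ} (w b v : Fin k → ℝ) (t : ℝ) : Prop :=
  ∃ j : Fin k, v j < 0 ∧ w j ≠ 0 ∧ w j * t + b j = 0

theorem exists_isNegActivationPoint_Ioo_of_max_lt {k : ℕ} {w b v : Fin k → ℝ} {z q z' : ℝ}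
    (hzq : z ≤ q) (hqz' : q ≤ z') (hq : max (NNet w b v z) (NNet w b v z') < NNet w b v q) :
    ∃ t ∈ Ioo z z', IsNegActivationPoint w b v t := by
  by_contra! hkink
  have hconv : ConvexOn ℝ (Icc z z') (NNet w b v) :=
    convexOn_NNet_Icc fun j hv hw t ht hzero => hkink t ht ⟨j, hv, hw, hzero⟩
  have hzz' := hzq.trans hqz'
  have hle := hconv.le_on_segment (left_mem_Icc.2 hzz') (right_mem_Icc.2 hzz')
    (by rw [segment_eq_Icc hzz']; exact ⟨hzq, hqz'⟩)
  exact hle.not_gt hq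

theorem NNet_neg {k : ℕ} (w b v : Fin k → ℝ) (z : ℝ) : NNet (-w) b v (-z) = NNet w b v z := by
  simp only [NNet, Pi.neg_apply, neg_mul_neg]

theorem IsKKT.neg {n k : ℕ} {x y : Fin n → ℝ} {w b v : Fin k → ℝ} (h : IsKKT x y w b v) :
    IsKKT (-x) y (-w) b v := by
  obtain ⟨hfeas, lam, sg, hlam, hsg, hsg1, hsg0, hcompl, hw, hb⟩ := h
  refine ⟨by simpa [NNet_neg] using hfeas, lam, sg, hlam, hsg, by simpa using hsg1,
    by simpa using hsg0, by simpa [NNet_neg] using hcompl, fun j hv => ?_, hb⟩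
  simp [hw j hv, Finset.sum_neg_distrib]

theorem IsKKT.false_of_pos_slopes {n k : ℕ} {x y : Fin n → ℝ} {w b v : Fin k → ℝ}
    (h : IsKKT x y w b v) {t t' : ℝ} (htt' : t < t')
    (hy : ∀ i, t ≤ x i → x i ≤ t' → y i = 1)
    (hpos : ∀ i, t ≤ x i → x i ≤ t' → 0 < t * x i + 1)
    {j j' : Fin k} (hv : v j ≠ 0) (hv' : v j' < 0) (hw : 0 < w j) (hw' : 0 < w j')
    (hkink : w j * t + b j = 0) (hkink' : w j' * t' + b j' = 0) : False := by
  obtain ⟨-, lam, sg, hlam, hsg, hsg1, hsg0, -, hw_eq, hb_eq⟩ := h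
  have hstat : ∀ l s, v l ≠ 0 → w l * s + b l = 0 →
      ∑ i, lam i * y i * sg i l * (s * x i + 1) = 0 := by
    intro l s hvl hzero
    have : w l * s + b l = v l * ∑ i, lam i * y i * sg i l * (s * x i + 1) := by
      rw [hw_eq l hvl, hb_eq l hvl, Finset.sum_mul, ← Finset.sum_add_distrib, Finset.mul_sum]
      exact Finset.sum_congr rfl fun i _ => by ring
    exact (mul_eq_zero.1 (this.symm.trans hzero)).resolve_left hvl
  have hslope : ∑ i, lam i * y i * sg i j' * x i < 0 := by
    have : w j' = v j' * ∑ i, lam i * y i * sg i j' * x i := by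
      rw [hw_eq j' hv'.ne, Finset.mul_sum]
      exact Finset.sum_congr rfl fun i _ => by ring
    exact neg_of_mul_pos_right (this ▸ hw') hv'.le
  have hpre : ∀ i, w j * x i + b j = w j * (x i - t) := fun i => by linear_combination hkink
  have hpre' : ∀ i, w j' * x i + b j' = w j' * (x i - t') := fun i => by
    linear_combination hkink'
  have hterm : ∀ i, 0 ≤ lam i * y i * (sg i j - sg i j') * (t * x i + 1) := by
    intro i
    rcases lt_or_ge (x i) t with hlt | hge
    · rw [hsg0 i j (by nlinarith [hpre i]), hsg0 i j' (by nlinarith [hpre' i])]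
      simp
    rcases lt_or_ge t' (x i) with hgt | hle
    · rw [hsg1 i j (by nlinarith [hpre i]), hsg1 i j' (by nlinarith [hpre' i])]
      simp
    have hdiff : 0 ≤ sg i j - sg i j' := by
      rcases hge.eq_or_lt with heq | hlt
      · linarith [hsg0 i j' (by nlinarith [hpre' i]), (hsg i j).1]
      · linarith [hsg1 i j (by nlinarith [hpre i]), (hsg i j').2]
    rw [hy i hge hle, mul_one]
    exact mul_nonneg (mul_nonneg (hlam i) hdiff) (hpos i hge hle).le
  have hsplit : ∑ i, lam i * y i * sg i j * (t * x i + 1) -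
      ∑ i, lam i * y i * sg i j' * (t' * x i + 1) =
      ∑ i, lam i * y i * (sg i j - sg i j') * (t * x i + 1) +
      (t - t') * ∑ i, lam i * y i * sg i j' * x i := by
    rw [Finset.mul_sum, ← Finset.sum_sub_distrib, ← Finset.sum_add_distrib]
    exact Finset.sum_congr rfl fun i _ => by ring
  linarith [hstat j t hv hkink, hstat j' t' hv'.ne hkink',
    Finset.sum_nonneg fun i (_ : i ∈ Finset.univ) => hterm i,
    mul_pos_of_neg_of_neg (sub_neg.2 htt') hslope]

theorem IsKKT.pos_slope_iff_neg_slope {n k : ℕ} {x y : Fin n → ℝ} {w b v : Fin k → ℝ}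
    (h : IsKKT x y w b v) {t t' : ℝ} (ht : 0 ≤ t) (htt' : t < t')
    (hy : ∀ i, t ≤ x i → x i ≤ t' → y i = 1)
    {j j' : Fin k} (hv : v j < 0) (hv' : v j' < 0) (hw : w j ≠ 0) (hw' : w j' ≠ 0)
    (hkink : w j * t + b j = 0) (hkink' : w j' * t' + b j' = 0) : 0 < w j ↔ w j' < 0 := by
  rcases hw.lt_or_gt with hneg | hpos <;> rcases hw'.lt_or_gt with hneg' | hpos'
  · refine (h.neg.false_of_pos_slopes (neg_lt_neg htt') (fun i hi hi' => ?_) (fun i hi hi' => ?_)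
      hv'.ne hv (neg_pos.2 hneg') (neg_pos.2 hneg) (by simpa using hkink')
      (by simpa using hkink)).elim
    · simp only [Pi.neg_apply, neg_le_neg_iff] at hi hi'
      exact hy i hi' hi
    · simp only [Pi.neg_apply, neg_le_neg_iff, neg_mul_neg] at hi hi' ⊢
      nlinarith
  · exact iff_of_false hneg.not_gt hpos'.not_gt
  · exact iff_of_true hpos hneg'
  · exact (h.false_of_pos_slopes htt' hy (fun i hi _ => by nlinarith) hv.ne hv' hpos hpos'
      hkink hkink').elim

theorem IsKKT.false_of_three_negActivationPoints {n k : ℕ} {x y : Fin n → ℝ}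
    {w b v : Fin k → ℝ} (h : IsKKT x y w b v) {t₀ t₁ t₂ : ℝ} (h₀ : 0 ≤ t₀) (h₀₁ : t₀ < t₁)
    (h₁₂ : t₁ < t₂) (hy : ∀ i, t₀ ≤ x i → x i ≤ t₂ → y i = 1)
    (hk₀ : IsNegActivationPoint w b v t₀) (hk₁ : IsNegActivationPoint w b v t₁)
    (hk₂ : IsNegActivationPoint w b v t₂) : False := by
  obtain ⟨j₀, hv₀, hw₀, hz₀⟩ := hk₀
  obtain ⟨j₁, hv₁, hw₁, hz₁⟩ := hk₁
  obtain ⟨j₂, hv₂, hw₂, hz₂⟩ := hk₂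
  have h01 := h.pos_slope_iff_neg_slope h₀ h₀₁ (fun i hi hi' => hy i hi (hi'.trans h₁₂.le))
    hv₀ hv₁ hw₀ hw₁ hz₀ hz₁
  have h12 := h.pos_slope_iff_neg_slope (h₀.trans h₀₁.le) h₁₂
    (fun i hi hi' => hy i (h₀₁.le.trans hi) hi') hv₁ hv₂ hw₁ hw₂ hz₁ hz₂
  have h02 := h.pos_slope_iff_neg_slope h₀ (h₀₁.trans h₁₂) hy hv₀ hv₂ hw₀ hw₂ hz₀ hz₂
  rcases hw₀.lt_or_gt with hs₀ | hs₀ <;> rcases hw₁.lt_or_gt with hs₁ | hs₁ <;>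
    rcases hw₂.lt_or_gt with hs₂ | hs₂ <;> grind

theorem Set.encard_le_of_forall_strictMono {α : Type*} [LinearOrder α] {s : Set α} {k : ℕ}
    (h : ∀ f : Fin (k + 1) → α, StrictMono f → (∀ r, f r ∈ s) → False) : s.encard ≤ k := by
  by_contra! hlt
  obtain ⟨t, hts, htk⟩ := Set.exists_subset_encard_eq (Order.add_one_le_of_lt hlt)
  have hfin : t.Finite := Set.finite_of_encard_eq_coe (k := k + 1) (by exact_mod_cast htk)
  have hcard : hfin.toFinset.card = k + 1 := by
    rw [hfin.encard_eq_coe_toFinset_card] at htk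
    exact_mod_cast htk
  exact h (hfin.toFinset.orderEmbOfFin hcard) (OrderEmbedding.strictMono _)
    fun r => hts (hfin.mem_toFinset.1 (Finset.orderEmbOfFin_mem _ hcard r))

theorem IsKKT.encard_dips_le_three {n k : ℕ} {x y : Fin n → ℝ} {w b v : Fin k → ℝ}
    (h : IsKKT x y w b v) {α β : ℝ} (hα : 0 ≤ α) (hy : ∀ i, α ≤ x i → x i ≤ β → y i = 1)
    {m : ℕ} {p : Fin m → ℝ} (hp : Monotone p) (hpα : ∀ s, α ≤ p s) (hpβ : ∀ s, p s ≤ β)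
    (hNp : ∀ s, NNet w b v (p s) = 1) :
    {ℓ : ℕ | ∃ h : ℓ + 1 < m,
      ∃ z ∈ Icc (p ⟨ℓ, Nat.lt_of_succ_lt h⟩) (p ⟨ℓ + 1, h⟩), NNet w b v z < 1}.encard ≤ 3 := by
  refine Set.encard_le_of_forall_strictMono fun f hf hdip => ?_
  choose hm z hz hNz using hdip
  have hkink : ∀ r : Fin 3,
      ∃ t ∈ Ioo (z r.castSucc) (z r.succ), IsNegActivationPoint w b v t := fun r =>
    exists_isNegActivationPoint_Ioo_of_max_lt (hz _).2
      ((hp (Fin.mk_le_mk.2 (hf (Fin.castSucc_lt_succ (i := r))))).trans (hz _).1)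
      ((max_lt (hNz _) (hNz _)).trans_eq (hNp _).symm)
  choose t ht hkt using hkink
  refine h.false_of_three_negActivationPoints (t₀ := t 0) (t₁ := t 1) (t₂ := t 2)
    (hα.trans ((hpα _).trans (hz 0).1) |>.trans (ht 0).1.le) ((ht 0).2.trans (ht 1).1)
    ((ht 1).2.trans (ht 2).1) (fun i hi hi' => hy i ?_ ?_) (hkt 0) (hkt 1) (hkt 2)
  · exact (hpα _).trans ((hz 0).1.trans ((ht 0).1.le.trans hi))
  · exact hi'.trans ((ht 2).2.le.trans ((hz 3).2.trans (hpβ _)))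

theorem stmt4_general {n k : ℕ} (x y : Fin n → ℝ) (hx : StrictMono x)
    (w b v : Fin k → ℝ) (hKKT : IsKKT x y w b v) (a c : Fin n) (ha : 0 ≤ x a)
    (hyac : ∀ i, a ≤ i → i ≤ c → y i = 1)
    (m : ℕ) (idx : Fin m → Fin n) (hmono : StrictMono idx)
    (hrange : ∀ i : Fin n,
      (a ≤ i ∧ i ≤ c ∧ y i * NNet w b v (x i) = 1) ↔ i ∈ Set.range idx) :
    {ℓ : ℕ | ∃ h : ℓ + 1 < m,
      ∃ z ∈ Set.Icc (x (idx ⟨ℓ, Nat.lt_of_succ_lt h⟩)) (x (idx ⟨ℓ + 1, h⟩)),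
        NNet w b v z < 1}.encard ≤ 5 := by
  have hmargin : ∀ s, a ≤ idx s ∧ idx s ≤ c ∧ y (idx s) * NNet w b v (x (idx s)) = 1 :=
    fun s => (hrange (idx s)).2 ⟨s, rfl⟩
  have hN : ∀ s, NNet w b v (x (idx s)) = 1 := fun s => by
    obtain ⟨has, hsc, hys⟩ := hmargin s
    rwa [hyac _ has hsc, one_mul] at hys
  refine (hKKT.encard_dips_le_three ha
    (fun i hi hi' => hyac i (hx.le_iff_le.1 hi) (hx.le_iff_le.1 hi'))
    (hx.monotone.comp hmono.monotone) (fun s => hx.monotone (hmargin s).1)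
    (fun s => hx.monotone (hmargin s).2.1) hN).trans (by norm_num)

/-- With `ℐ'_{a,c} = {i : a ≤ i ≤ c, y_i N_θ(x_i) = 1}` enumerated by the
strictly monotone `idx : Fin m → Fin n`, there are at most `5` indices `ℓ` such that
`N_θ(z) < 1` for some `z ∈ [x_{i_ℓ}, x_{i_{ℓ+1}}]`. -/
theorem stmt4 {n k : ℕ} (x y : Fin n → ℝ)
    (hx : StrictMono x) (hy : ∀ i, y i = 1 ∨ y i = -1)
    (w b v : Fin k → ℝ) (hKKT : IsKKT x y w b v)
    (a c : Fin n) (hac : a < c) (ha : 0 ≤ x a) (hxac : x a < x c)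
    (hyac : ∀ i, a ≤ i → i ≤ c → y i = 1)
    (m : ℕ) (idx : Fin m → Fin n) (hmono : StrictMono idx)
    (hrange : ∀ i : Fin n,
      (a ≤ i ∧ i ≤ c ∧ y i * NNet w b v (x i) = 1) ↔ i ∈ Set.range idx) :
    {ℓ : ℕ | ∃ h : ℓ + 1 < m,
      ∃ z ∈ Set.Icc (x (idx ⟨ℓ, Nat.lt_of_succ_lt h⟩)) (x (idx ⟨ℓ + 1, h⟩)),
        NNet w b v z < 1}.encard ≤ 5 :=
  stmt4_general x y hx w b v hKKT a c ha hyac m idx hmono hrange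
end

section
/- Let S = {(x_i, y_i)}_{i=1}^n ⊆ ℝ × {−1,1} be a dataset with x_1 < x_2 < … < x_n, and suppose θ = (w, b, v) satisfies the KKT conditions of the maximum-margin problem for a width-k depth-2 ReLU network on S. Let 1 ≤ a < b ≤ n be such that x_b > x_a ≥ 0 and y_i = 1 for all a ≤ i ≤ b, and let ℐ'_{a,b} = {i : a ≤ i ≤ b, y_i N_θ(x_i) = 1} be enumerated as i_1 < … < i_m. Then there are at most 30 points in the interval [x_{i_1}, x_{i_m}] at which N_θ is not locally affine (i.e., at most 30 boundaries between linear regions in [x_{i_1}, x_{i_m}]). -/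
open Finset

/-!
Between two consecutive activation points `N = NNet w b v` is affine, and at a point `p` its
one-sided slopes differ only if some neuron with `v j ≠ 0` switches at `p`. For such a neuron,
stationarity writes `(w j * t + b j) / v j = A * (t - p)`, where `A = w j / v j`, as
`∑ λᵢ yᵢ (xᵢ t + 1)` over the data on the neuron's active side of `p` plus `β (p t + 1)`, with
`0 ≤ β ≤` the multiplier mass sitting at `p`. On a block where every label is `1` and `x ≥ 0`,
comparing two such certificates on the same side shows:
* an interval containing no margin point carries no multiplier mass, hence at most one kink per
  side;
* there are at most two concave kinks (`v j < 0`), one per side.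
Between concave kinks `N` is convex, so three margin points (`N = 1`) force `N ≡ 1` between the
outer two. A convex piece therefore has at most `2 + 1 + 2 + 1 + 2 = 8` kinks, and the block at
most `4 + 3 * 8 = 28`.
-/

open Filter Set Topology

/-- `reluRightSlope w b p` and `reluLeftSlope w b p` are the one-sided derivatives of
`z ↦ relu (w * z + b)` at `p`. -/
noncomputable def reluRightSlope (w b p : ℝ) : ℝ :=
  if 0 < w * p + b ∨ (w * p + b = 0 ∧ 0 < w) then w else 0

noncomputable def reluLeftSlope (w b p : ℝ) : ℝ :=
  if 0 < w * p + b ∨ (w * p + b = 0 ∧ w < 0) then w else 0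

lemma relu_eventually_nhdsGT (w b p : ℝ) :
    ∀ᶠ z in 𝓝[>] p, relu (w * z + b) = relu (w * p + b) + reluRightSlope w b p * (z - p) := by
  have hc : Continuous fun z : ℝ => w * z + b := by fun_prop
  rcases lt_trichotomy (w * p + b) 0 with h | h | h
  · filter_upwards [nhdsWithin_le_nhds (hc.continuousAt.eventually_lt continuousAt_const h)]
      with z hz
    have : ¬ (0 < w * p + b ∨ (w * p + b = 0 ∧ 0 < w)) := by
      rintro (h' | ⟨h', -⟩) <;> linarith
    simp [reluRightSlope, relu, this, max_eq_left hz.le, max_eq_left h.le]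
  · filter_upwards [self_mem_nhdsWithin] with z (hz : p < z)
    have hwz : w * z + b = w * (z - p) := by linarith
    rcases le_or_gt w 0 with hw | hw
    · have := mul_nonpos_of_nonpos_of_nonneg hw (sub_nonneg.2 hz.le)
      simp [reluRightSlope, relu, h, hwz, hw.not_gt, max_eq_left this]
    · have := mul_pos hw (sub_pos.2 hz)
      simp [reluRightSlope, relu, h, hwz, hw, max_eq_right this.le]
  · filter_upwards [nhdsWithin_le_nhds (continuousAt_const.eventually_lt hc.continuousAt h)]
      with z hz
    simp [reluRightSlope, relu, h, max_eq_right hz.le, max_eq_right h.le]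
    ring

lemma relu_eventually_nhdsLT (w b p : ℝ) :
    ∀ᶠ z in 𝓝[<] p, relu (w * z + b) = relu (w * p + b) + reluLeftSlope w b p * (z - p) := by
  have hc : Continuous fun z : ℝ => w * z + b := by fun_prop
  rcases lt_trichotomy (w * p + b) 0 with h | h | h
  · filter_upwards [nhdsWithin_le_nhds (hc.continuousAt.eventually_lt continuousAt_const h)]
      with z hz
    have : ¬ (0 < w * p + b ∨ (w * p + b = 0 ∧ w < 0)) := by
      rintro (h' | ⟨h', -⟩) <;> linarith
    simp [reluLeftSlope, relu, this, max_eq_left hz.le, max_eq_left h.le]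
  · filter_upwards [self_mem_nhdsWithin] with z (hz : z < p)
    have hwz : w * z + b = w * (z - p) := by linarith
    rcases le_or_gt 0 w with hw | hw
    · have := mul_nonpos_of_nonneg_of_nonpos hw (sub_nonpos.2 hz.le)
      simp [reluLeftSlope, relu, h, hwz, hw.not_gt, max_eq_left this]
    · have := mul_pos_of_neg_of_neg hw (sub_neg.2 hz)
      simp [reluLeftSlope, relu, h, hwz, hw, max_eq_right this.le]
  · filter_upwards [nhdsWithin_le_nhds (continuousAt_const.eventually_lt hc.continuousAt h)]
      with z hz
    simp [reluLeftSlope, relu, h, max_eq_right hz.le, max_eq_right h.le]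
    ring

lemma reluRightSlope_sub_reluLeftSlope (w b p : ℝ) :
    reluRightSlope w b p - reluLeftSlope w b p = if w * p + b = 0 then |w| else 0 := by
  unfold reluRightSlope reluLeftSlope
  rcases lt_trichotomy w 0 with hw | rfl | hw <;>
  split_ifs <;> simp_all [abs_of_neg, abs_of_pos] <;> linarith

lemma relu_affine_of_no_kink {w b s t : ℝ} (hst : s < t)
    (h : ∀ z ∈ Ioo s t, w * z + b = 0 → w = 0) :
    relu (w * t + b) = relu (w * s + b) + reluRightSlope w b s * (t - s) ∧
      reluLeftSlope w b t = reluRightSlope w b s := by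
  have hc : ContinuousOn (fun z => w * z + b) (Icc s t) := by fun_prop
  have hsign : (0 ≤ w * s + b ∧ 0 ≤ w * t + b) ∨ (w * s + b ≤ 0 ∧ w * t + b ≤ 0) := by
    by_contra! hne
    obtain ⟨z, hz, hz0⟩ : ∃ z ∈ Ioo s t, w * z + b = 0 := by
      rcases lt_trichotomy (w * s + b) 0 with h1 | h1 | h1
      · exact intermediate_value_Ioo hst.le hc ⟨h1, hne.2 h1.le⟩
      · linarith [hne.1 h1.ge, hne.2 h1.le]
      · exact intermediate_value_Ioo' hst.le hc ⟨hne.1 h1.le, h1⟩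
    obtain rfl := h z hz hz0
    simp only [zero_mul, zero_add] at hz0 hne
    simp [hz0] at hne
  have hwt : w * t + b = (w * s + b) + w * (t - s) := by ring
  have hts : 0 < t - s := sub_pos.2 hst
  rcases hsign with ⟨h1, h2⟩ | ⟨h1, h2⟩
  · have hR : reluRightSlope w b s = w := by
      unfold reluRightSlope
      split_ifs with hR
      · rfl
      · push Not at hR
        have := hR.2 (le_antisymm hR.1 h1)
        nlinarith
    have hL : reluLeftSlope w b t = w := by
      unfold reluLeftSlope
      split_ifs with hL
      · rfl
      · push Not at hL
        have := hL.2 (le_antisymm hL.1 h2)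
        nlinarith
    rw [hR, hL, relu, relu, max_eq_right h1, max_eq_right h2]
    exact ⟨hwt, rfl⟩
  · have hR : reluRightSlope w b s = 0 := by
      unfold reluRightSlope
      split_ifs with hR
      · rcases hR with hR | hR
        · linarith
        · nlinarith
      · rfl
    have hL : reluLeftSlope w b t = 0 := by
      unfold reluLeftSlope
      split_ifs with hL
      · rcases hL with hL | hL
        · linarith
        · nlinarith
      · rfl
    rw [hR, hL, relu, relu, max_eq_left h1, max_eq_left h2]
    simp

noncomputable def rightSlope {k : ℕ} (w b v : Fin k → ℝ) (p : ℝ) : ℝ :=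
  ∑ j, v j * reluRightSlope (w j) (b j) p

noncomputable def leftSlope {k : ℕ} (w b v : Fin k → ℝ) (p : ℝ) : ℝ :=
  ∑ j, v j * reluLeftSlope (w j) (b j) p

section Slopes

variable {k : ℕ} (w b v : Fin k → ℝ) (p : ℝ)

lemma NNet_eventually_nhdsGT :
    ∀ᶠ z in 𝓝[>] p, NNet w b v z = NNet w b v p + rightSlope w b v p * (z - p) := by
  filter_upwards [eventually_all.2 fun j => relu_eventually_nhdsGT (w j) (b j) p] with z hz
  simp only [NNet, rightSlope, hz, mul_add, sum_add_distrib, sum_mul, mul_assoc]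

lemma NNet_eventually_nhdsLT :
    ∀ᶠ z in 𝓝[<] p, NNet w b v z = NNet w b v p + leftSlope w b v p * (z - p) := by
  filter_upwards [eventually_all.2 fun j => relu_eventually_nhdsLT (w j) (b j) p] with z hz
  simp only [NNet, leftSlope, hz, mul_add, sum_add_distrib, sum_mul, mul_assoc]

lemma hasDerivWithinAt_NNet_Ioi :
    HasDerivWithinAt (NNet w b v) (rightSlope w b v p) (Ioi p) p := by
  have h : HasDerivWithinAt (fun z => NNet w b v p + rightSlope w b v p * (z - p))
      (rightSlope w b v p) (Ioi p) p := by
    simpa using ((hasDerivAt_id p).sub_const p).const_mul (rightSlope w b v p)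
      |>.const_add (NNet w b v p) |>.hasDerivWithinAt
  exact h.congr_of_eventuallyEq (NNet_eventually_nhdsGT w b v p) (by simp)

lemma hasDerivWithinAt_NNet_Iio :
    HasDerivWithinAt (NNet w b v) (leftSlope w b v p) (Iio p) p := by
  have h : HasDerivWithinAt (fun z => NNet w b v p + leftSlope w b v p * (z - p))
      (leftSlope w b v p) (Iio p) p := by
    simpa using ((hasDerivAt_id p).sub_const p).const_mul (leftSlope w b v p)
      |>.const_add (NNet w b v p) |>.hasDerivWithinAt
  exact h.congr_of_eventuallyEq (NNet_eventually_nhdsLT w b v p) (by simp)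

lemma locallyAffineAt_NNet_iff :
    LocallyAffineAt (NNet w b v) p ↔ leftSlope w b v p = rightSlope w b v p := by
  constructor
  · rintro ⟨c, d, hcd⟩
    have haff : HasDerivAt (fun z => c * z + d) c p := by
      simpa using ((hasDerivAt_id p).const_mul c).add_const d
    have hc := haff.congr_of_eventuallyEq hcd
    rw [(uniqueDiffWithinAt_Iio p).eq_deriv _ (hasDerivWithinAt_NNet_Iio w b v p)
        hc.hasDerivWithinAt,
      (uniqueDiffWithinAt_Ioi p).eq_deriv _ (hasDerivWithinAt_NNet_Ioi w b v p)
        hc.hasDerivWithinAt]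
  · intro h
    refine ⟨rightSlope w b v p, NNet w b v p - rightSlope w b v p * p, ?_⟩
    rw [← nhdsNE_sup_pure p, ← nhdsLT_sup_nhdsGT p, eventually_sup, eventually_sup,
      eventually_pure]
    refine ⟨⟨?_, ?_⟩, by ring⟩
    · filter_upwards [NNet_eventually_nhdsLT w b v p] with z hz
      rw [hz, h]; ring
    · filter_upwards [NNet_eventually_nhdsGT w b v p] with z hz
      rw [hz]; ring

lemma rightSlope_sub_leftSlope :
    rightSlope w b v p - leftSlope w b v p =
      ∑ j, if w j * p + b j = 0 then v j * |w j| else 0 := by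
  simp only [rightSlope, leftSlope, ← sum_sub_distrib, ← mul_sub,
    reluRightSlope_sub_reluLeftSlope, mul_ite, mul_zero]

variable {w b v p}

lemma isActivationPoint_of_leftSlope_ne_rightSlope
    (h : leftSlope w b v p ≠ rightSlope w b v p) : IsActivationPoint w b v p := by
  have : rightSlope w b v p - leftSlope w b v p ≠ 0 := sub_ne_zero.2 h.symm
  rw [rightSlope_sub_leftSlope] at this
  obtain ⟨j, -, hj⟩ := exists_ne_zero_of_sum_ne_zero this
  split_ifs at hj with hp
  · exact ⟨j, left_ne_zero_of_mul hj, abs_ne_zero.1 (right_ne_zero_of_mul hj), hp⟩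
  · exact absurd rfl hj

lemma exists_neuron_of_rightSlope_lt_leftSlope (h : rightSlope w b v p < leftSlope w b v p) :
    ∃ j, v j < 0 ∧ w j ≠ 0 ∧ w j * p + b j = 0 := by
  have : rightSlope w b v p - leftSlope w b v p < ∑ _j : Fin k, (0 : ℝ) := by simpa using h
  rw [rightSlope_sub_leftSlope] at this
  obtain ⟨j, -, hj⟩ := exists_lt_of_sum_lt this
  split_ifs at hj with hp
  · have hw : w j ≠ 0 := by rintro hw; simp [hw] at hj
    exact ⟨j, neg_of_mul_neg_left hj (abs_nonneg _), hw, hp⟩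
  · exact absurd hj (lt_irrefl 0)

lemma NNet_affine_of_forall_not_isActivationPoint {s t : ℝ} (hst : s < t)
    (h : ∀ z ∈ Ioo s t, ¬ IsActivationPoint w b v z) :
    NNet w b v t = NNet w b v s + rightSlope w b v s * (t - s) ∧
      leftSlope w b v t = rightSlope w b v s := by
  have hj : ∀ j, v j * relu (w j * t + b j)
        = v j * relu (w j * s + b j) + v j * reluRightSlope (w j) (b j) s * (t - s) ∧
      v j * reluLeftSlope (w j) (b j) t = v j * reluRightSlope (w j) (b j) s := by
    intro j
    by_cases hv : v j = 0
    · simp [hv]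
    have := relu_affine_of_no_kink hst fun z hz hz0 => by
      by_contra hw
      exact h z hz ⟨j, hv, hw, hz0⟩
    rw [this.1, this.2]
    exact ⟨by ring, rfl⟩
  simp [NNet, rightSlope, leftSlope, sum_mul, ← sum_add_distrib, (hj _).1, (hj _).2]

end Slopes

section PiecewiseAffine

variable {f L R : ℝ → ℝ} {G : Set ℝ}

lemma slope_bounds_of_affine_off_finite (hG : G.Finite)
    (haff : ∀ s t, s < t → Disjoint G (Ioo s t) → f t = f s + R s * (t - s) ∧ L t = R s)
    {I : Set ℝ} (hI : I.OrdConnected) (hLR : ∀ z ∈ I, L z ≤ R z) {s t : ℝ} (hs : s ∈ I)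
    (ht : t ∈ I) (hst : s < t) :
    R s ≤ L t ∧ R s * (t - s) ≤ f t - f s ∧ f t - f s ≤ L t * (t - s) := by
  induction hN : (G ∩ Ioo s t).ncard using Nat.strong_induction_on generalizing s t with
  | _ N ih =>
  by_cases hdisj : Disjoint G (Ioo s t)
  · obtain ⟨hf, hLR'⟩ := haff s t hst hdisj
    rw [hLR']
    exact ⟨le_rfl, by linarith, by linarith⟩
  obtain ⟨g, hgG, hg⟩ := not_disjoint_iff.1 hdisj
  have hgI : g ∈ I := hI.out hs ht (Ioo_subset_Icc_self hg)
  have hlt : ∀ {s' t' : ℝ}, Set.Ioo s' t' ⊆ Ioo s t → g ∉ Set.Ioo s' t' →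
      (G ∩ Ioo s' t').ncard < N :=
    fun hsub hg' => hN ▸ ncard_lt_ncard
      ⟨inter_subset_inter_right _ hsub, fun h => hg' (h ⟨hgG, hg⟩).2⟩ (hG.inter_of_left _)
  obtain ⟨h₁, h₂, h₃⟩ := ih _ (hlt (Ioo_subset_Ioo_right hg.2.le) (fun h => h.2.false))
    hs hgI hg.1 rfl
  obtain ⟨h₄, h₅, h₆⟩ := ih _ (hlt (Ioo_subset_Ioo_left hg.1.le) (fun h => h.1.false))
    hgI ht hg.2 rfl
  have hg' := hLR g hgI
  have hsg : 0 < g - s := sub_pos.2 hg.1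
  have hgt : 0 < t - g := sub_pos.2 hg.2
  exact ⟨by linarith, by nlinarith, by nlinarith⟩

theorem convexOn_of_affine_off_finite (hG : G.Finite)
    (haff : ∀ s t, s < t → Disjoint G (Ioo s t) → f t = f s + R s * (t - s) ∧ L t = R s)
    {I : Set ℝ} (hI : I.OrdConnected) (hLR : ∀ z ∈ I, L z ≤ R z) : ConvexOn ℝ I f := by
  refine convexOn_of_slope_mono_adjacent hI.convex fun {x y z} hx hz hxy hyz => ?_
  have hy : y ∈ I := hI.out hx hz ⟨hxy.le, hyz.le⟩
  obtain ⟨-, -, h₁⟩ := slope_bounds_of_affine_off_finite hG haff hI hLR hx hy hxy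
  obtain ⟨-, h₂, -⟩ := slope_bounds_of_affine_off_finite hG haff hI hLR hy hz hyz
  calc (f y - f x) / (y - x) ≤ L y := (div_le_iff₀ (sub_pos.2 hxy)).2 h₁
    _ ≤ R y := hLR y hy
    _ ≤ (f z - f y) / (z - y) := (le_div_iff₀ (sub_pos.2 hyz)).2 h₂

end PiecewiseAffine

lemma ConvexOn.eqOn_Icc_of_eq_s5 {f : ℝ → ℝ} {I : Set ℝ} (hf : ConvexOn ℝ I f) {l m r : ℝ}
    (hl : l ∈ I) (hr : r ∈ I) (hlm : l < m) (hmr : m < r) (h₁ : f l = f m) (h₂ : f r = f m) :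
    EqOn f (fun _ => f m) (Icc l r) := by
  intro z hz
  have hzI : z ∈ I := hf.1.ordConnected.out hl hr hz
  refine le_antisymm ?_ ?_
  · simpa [h₁, h₂] using hf.le_on_segment hl hr (by rwa [segment_eq_Icc (hlm.trans hmr).le])
  rcases lt_trichotomy z m with hzm | rfl | hmz
  · have := hf.slope_mono_adjacent hzI hr hzm hmr
    rw [h₂, sub_self, zero_div, div_le_iff₀ (sub_pos.2 hzm)] at this
    simp only
    linarith
  · rfl
  · have := hf.slope_mono_adjacent hl hzI hlm hmz
    rw [h₁, sub_self, zero_div, le_div_iff₀ (sub_pos.2 hmz)] at this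
    simp only
    linarith

section Convexity

variable {k : ℕ} {w b v : Fin k → ℝ}

lemma finite_setOf_isActivationPoint : {z | IsActivationPoint w b v z}.Finite :=
  (finite_range fun j => -b j / w j).subset fun z ⟨j, _, hw, hz⟩ =>
    ⟨j, by field_simp; linarith⟩

lemma convexOn_NNet {I : Set ℝ} (hI : I.OrdConnected)
    (h : ∀ z ∈ I, leftSlope w b v z ≤ rightSlope w b v z) : ConvexOn ℝ I (NNet w b v) :=
  convexOn_of_affine_off_finite finite_setOf_isActivationPoint
    (fun _ _ hst hG => NNet_affine_of_forall_not_isActivationPoint hst fun _ hz hact =>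
      disjoint_left.1 hG hact hz) hI h

lemma locallyAffineAt_NNet_of_eq {l m r z : ℝ} (hlm : l < m) (hmr : m < r) (hz : z ∈ Ioo l r)
    (h : ∀ z ∈ Icc l r, leftSlope w b v z ≤ rightSlope w b v z)
    (h₁ : NNet w b v l = NNet w b v m) (h₂ : NNet w b v r = NNet w b v m) :
    LocallyAffineAt (NNet w b v) z := by
  have hEq := (convexOn_NNet ordConnected_Icc h).eqOn_Icc_of_eq_s5
    (left_mem_Icc.2 (hlm.trans hmr).le) (right_mem_Icc.2 (hlm.trans hmr).le) hlm hmr h₁ h₂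
  exact ⟨0, NNet w b v m, eventually_of_mem (Icc_mem_nhds hz.1 hz.2) fun z hz => by
    simp [hEq hz]⟩

end Convexity

section Dual

variable {n : ℕ} (x y lam : Fin n → ℝ)

noncomputable def dualSum (I : Finset (Fin n)) (t : ℝ) : ℝ :=
  ∑ i ∈ I, lam i * y i * (x i * t + 1)

noncomputable def massAt (p : ℝ) : ℝ :=
  ∑ i with x i = p, lam i

/-- What stationarity says about a neuron switching at `p` with `A = w j / v j`: the data strictly
on its active side are indexed by `I`, and `β` is the share of the multipliers sitting at `p`. -/
def KinkCert (I : Finset (Fin n)) (p A : ℝ) : Prop :=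
  ∃ β, 0 ≤ β ∧ β ≤ massAt x lam p ∧ ∀ t, A * (t - p) = dualSum x y lam I t + β * (p * t + 1)

def RightKinkCert (p A : ℝ) : Prop := KinkCert x y lam {i | p < x i} p A

def LeftKinkCert (p A : ℝ) : Prop := KinkCert x y lam {i | x i < p} p A

variable {x y lam}

lemma sum_eq_dualSum_add {s : Fin n → ℝ} {p : ℝ} (I : Finset (Fin n))
    (hI1 : ∀ i ∈ I, s i = 1) (hIp : ∀ i ∈ I, x i ≠ p) (hI0 : ∀ i ∉ I, x i ≠ p → s i = 0)
    (hy : ∀ i, x i = p → y i = 1) (t : ℝ) :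
    ∑ i, lam i * y i * s i * (x i * t + 1)
      = dualSum x y lam I t + (∑ i with x i = p, lam i * s i) * (p * t + 1) := by
  rw [dualSum, ← univ_inter I, ← sum_ite_mem, sum_mul, sum_filter, ← sum_add_distrib]
  refine sum_congr rfl fun i _ => ?_
  by_cases hi : i ∈ I
  · simp [hi, hI1 i hi, hIp i hi]
  by_cases hxi : x i = p
  · simp [hi, hxi, hy i hxi]
  · simp [hi, hxi, hI0 i hi hxi]

lemma kinkCert_of_stationary {s : Fin n → ℝ} {wj bj vj p : ℝ} (hl : ∀ i, 0 ≤ lam i)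
    (hs : ∀ i, s i ∈ Icc (0 : ℝ) 1) (hs1 : ∀ i, 0 < wj * x i + bj → s i = 1)
    (hs0 : ∀ i, wj * x i + bj < 0 → s i = 0) (hw : wj = ∑ i, lam i * y i * vj * s i * x i)
    (hb : bj = ∑ i, lam i * y i * vj * s i) (hy : ∀ i, x i = p → y i = 1) (hv : vj ≠ 0)
    (hp : wj * p + bj = 0) :
    (0 < wj → RightKinkCert x y lam p (wj / vj)) ∧
      (wj < 0 → LeftKinkCert x y lam p (wj / vj)) := by
  have hlin : ∀ t, wj / vj * (t - p) = ∑ i, lam i * y i * s i * (x i * t + 1) := by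
    intro t
    have : wj * t + bj = vj * ∑ i, lam i * y i * s i * (x i * t + 1) := by
      rw [hw, hb, sum_mul, ← sum_add_distrib, mul_sum]
      exact sum_congr rfl fun i _ => by ring
    rw [div_mul_eq_mul_div, div_eq_iff hv]
    linear_combination this - hp
  have hβ : 0 ≤ ∑ i with x i = p, lam i * s i ∧
      ∑ i with x i = p, lam i * s i ≤ massAt x lam p :=
    ⟨sum_nonneg fun i _ => mul_nonneg (hl i) (hs i).1,
      sum_le_sum fun i _ => mul_le_of_le_one_right (hl i) (hs i).2⟩
  have hpre : ∀ i, wj * x i + bj = wj * (x i - p) := fun i => by linarith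
  refine ⟨fun hw0 => ⟨_, hβ.1, hβ.2, fun t => ?_⟩, fun hw0 => ⟨_, hβ.1, hβ.2, fun t => ?_⟩⟩
  · rw [hlin, sum_eq_dualSum_add _ _ _ _ hy]
    · intro i hi
      simp only [Finset.mem_filter, Finset.mem_univ, true_and] at hi
      exact hs1 i (by rw [hpre]; exact mul_pos hw0 (sub_pos.2 hi))
    · simp +contextual [ne_of_gt]
    · intro i hi hne
      simp only [Finset.mem_filter, Finset.mem_univ, true_and] at hi
      have : x i - p < 0 := sub_neg.2 (lt_of_le_of_ne (not_lt.1 hi) hne)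
      exact hs0 i (by rw [hpre]; exact mul_neg_of_pos_of_neg hw0 this)
  · rw [hlin, sum_eq_dualSum_add _ _ _ _ hy]
    · intro i hi
      simp only [Finset.mem_filter, Finset.mem_univ, true_and] at hi
      exact hs1 i (by rw [hpre]; exact mul_pos_of_neg_of_neg hw0 (sub_neg.2 hi))
    · simp +contextual [ne_of_lt]
    · intro i hi hne
      simp only [Finset.mem_filter, Finset.mem_univ, true_and] at hi
      have : 0 < x i - p := sub_pos.2 (lt_of_le_of_ne (not_lt.1 hi) hne.symm)
      exact hs0 i (by rw [hpre]; exact mul_neg_of_neg_of_pos hw0 this)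

lemma dualSum_add_massAt_le {I J : Finset (Fin n)} {r t : ℝ} (hl : ∀ i, 0 ≤ lam i)
    (hIJ : I ⊆ J) (hr : ∀ i, x i = r → i ∈ J \ I) (hJ : ∀ i ∈ J \ I, y i = 1 ∧ 0 ≤ x i)
    (ht : 0 ≤ t) :
    dualSum x y lam I t + massAt x lam r * (r * t + 1) ≤ dualSum x y lam J t := by
  have hmass : massAt x lam r * (r * t + 1) =
      ∑ i with x i = r, lam i * y i * (x i * t + 1) := by
    rw [massAt, sum_mul]
    refine sum_congr rfl fun i hi => ?_
    obtain rfl := (Finset.mem_filter.1 hi).2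
    rw [(hJ i (hr i rfl)).1, mul_one]
  rw [hmass, dualSum, dualSum, ← sum_sdiff hIJ, add_comm]
  refine add_le_add_left (sum_le_sum_of_subset_of_nonneg
    (fun i hi => hr i (Finset.mem_filter.1 hi).2) fun i hi _ => ?_) _
  rw [(hJ i hi).1, mul_one]
  exact mul_nonneg (hl i) (by nlinarith [(hJ i hi).2])

lemma massAt_eq_zero {p : ℝ} (h : ∀ i, x i = p → lam i = 0) : massAt x lam p = 0 :=
  sum_eq_zero fun i hi => h i (Finset.mem_filter.1 hi).2

lemma dualSum_eq_of_subset {I J : Finset (Fin n)} (hIJ : I ⊆ J)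
    (h : ∀ i ∈ J, i ∉ I → lam i = 0) : dualSum x y lam I = dualSum x y lam J :=
  funext fun _ => sum_subset hIJ fun i hi hni => by simp [h i hi hni]

lemma KinkCert.eq_zero_of_dualSum_eq {I J : Finset (Fin n)} {p q A A' : ℝ} (hpq : p ≠ q)
    (hp : massAt x lam p = 0) (hq : massAt x lam q = 0)
    (hIJ : dualSum x y lam I = dualSum x y lam J)
    (h₁ : KinkCert x y lam I p A) (h₂ : KinkCert x y lam J q A') : A' = 0 := by
  obtain ⟨β, hβ0, hβ1, h₁⟩ := h₁
  obtain ⟨β', hβ0', hβ1', h₂⟩ := h₂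
  obtain rfl : β = 0 := le_antisymm (hp ▸ hβ1) hβ0
  obtain rfl : β' = 0 := le_antisymm (hq ▸ hβ1') hβ0'
  have h : A' * (p - q) = 0 := by
    have := h₁ p
    rw [h₂ p, ← hIJ]
    linarith
  exact (mul_eq_zero.1 h).resolve_right (sub_ne_zero.2 hpq)

lemma RightKinkCert.false_of_neg {p q A A' : ℝ} (hl : ∀ i, 0 ≤ lam i) (hp : 0 ≤ p)
    (hpq : p < q) (hy : ∀ i, x i ∈ Icc p q → y i = 1) (hA : A < 0)
    (h₁ : RightKinkCert x y lam p A) (h₂ : RightKinkCert x y lam q A') : False := by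
  obtain ⟨β, hβ0, -, h₁⟩ := h₁
  obtain ⟨β', -, hβ1', h₂⟩ := h₂
  have hle := dualSum_add_massAt_le (x := x) (y := y) (I := {i | q < x i})
    (J := {i | p < x i}) (r := q) (t := q) hl (fun i hi => by simp at hi ⊢; linarith)
    (fun i hi => by simp [hi, hpq])
    (fun i hi => by
      simp at hi
      exact ⟨hy i ⟨hi.1.le, hi.2⟩, by linarith⟩) (by linarith)
  have e₁ := h₁ q
  have e₂ := h₂ q
  nlinarith [mul_le_mul_of_nonneg_right hβ1' (by nlinarith : (0 : ℝ) ≤ q * q + 1),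
    mul_nonneg hβ0 (by nlinarith : (0 : ℝ) ≤ p * q + 1), mul_neg_of_neg_of_pos hA (sub_pos.2 hpq)]

lemma LeftKinkCert.false_of_pos {p q A A' : ℝ} (hl : ∀ i, 0 ≤ lam i) (hp : 0 ≤ p)
    (hpq : p < q) (hy : ∀ i, x i ∈ Icc p q → y i = 1) (hA : 0 < A)
    (h₁ : LeftKinkCert x y lam p A) (h₂ : LeftKinkCert x y lam q A') : False := by
  obtain ⟨β, -, hβ1, h₁⟩ := h₁
  obtain ⟨β', hβ0', -, h₂⟩ := h₂
  have hle := dualSum_add_massAt_le (x := x) (y := y) (I := {i | x i < p})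
    (J := {i | x i < q}) (r := p) (t := q) hl (fun i hi => by simp at hi ⊢; linarith)
    (fun i hi => by simp [hi, hpq])
    (fun i hi => by
      simp at hi
      exact ⟨hy i ⟨hi.2, hi.1.le⟩, by linarith⟩) (by linarith)
  have e₁ := h₁ q
  have e₂ := h₂ q
  nlinarith [mul_le_mul_of_nonneg_right hβ1 (by nlinarith : (0 : ℝ) ≤ p * q + 1),
    mul_nonneg hβ0' (by nlinarith : (0 : ℝ) ≤ q * q + 1), mul_pos hA (sub_pos.2 hpq)]

end Dual

section Certificates

variable {n k : ℕ} {x y lam : Fin n → ℝ} {w b v : Fin k → ℝ}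

def KinkCertsAt (x y lam : Fin n → ℝ) (w b v : Fin k → ℝ) (p : ℝ) : Prop :=
  ∀ j, v j ≠ 0 → w j * p + b j = 0 →
    (0 < w j → RightKinkCert x y lam p (w j / v j)) ∧
      (w j < 0 → LeftKinkCert x y lam p (w j / v j))

lemma IsKKT.exists_multipliers (h : IsKKT x y w b v) :
    ∃ lam : Fin n → ℝ, (∀ i, 0 ≤ lam i) ∧ (∀ i, y i * NNet w b v (x i) ≠ 1 → lam i = 0) ∧
      ∀ p, (∀ i, x i = p → y i = 1) → KinkCertsAt x y lam w b v p := by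
  obtain ⟨-, lam, sg, hl, hsg, hsg1, hsg0, hcomp, hw, hb⟩ := h
  exact ⟨lam, hl, hcomp, fun p hy j hv hp => kinkCert_of_stationary hl (hsg · j) (hsg1 · j)
    (hsg0 · j) (hw j hv) (hb j hv) hy hv hp⟩

lemma KinkCertsAt.exists_of_not_locallyAffineAt {p : ℝ} (hc : KinkCertsAt x y lam w b v p)
    (h : ¬ LocallyAffineAt (NNet w b v) p) :
    (∃ A ≠ 0, RightKinkCert x y lam p A) ∨ (∃ A ≠ 0, LeftKinkCert x y lam p A) := by
  obtain ⟨j, hv, hw, hp⟩ :=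
    isActivationPoint_of_leftSlope_ne_rightSlope (mt (locallyAffineAt_NNet_iff w b v p).2 h)
  have hA : w j / v j ≠ 0 := div_ne_zero hw hv
  rcases hw.lt_or_gt with hw | hw
  · exact .inr ⟨_, hA, (hc j hv hp).2 hw⟩
  · exact .inl ⟨_, hA, (hc j hv hp).1 hw⟩

lemma KinkCertsAt.exists_of_rightSlope_lt_leftSlope {p : ℝ} (hc : KinkCertsAt x y lam w b v p)
    (h : rightSlope w b v p < leftSlope w b v p) :
    (∃ A < 0, RightKinkCert x y lam p A) ∨ (∃ A > 0, LeftKinkCert x y lam p A) := by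
  obtain ⟨j, hv, hw, hp⟩ := exists_neuron_of_rightSlope_lt_leftSlope h
  rcases hw.lt_or_gt with hw | hw
  · exact .inr ⟨_, div_pos_of_neg_of_neg hw hv, (hc j hv.ne hp).2 hw⟩
  · exact .inl ⟨_, div_neg_of_pos_of_neg hw hv, (hc j hv.ne hp).1 hw⟩

lemma encard_le_two_of_subsingleton {s t u : Set ℝ} (h : s ⊆ t ∪ u) (ht : t.Subsingleton)
    (hu : u.Subsingleton) : s.encard ≤ 2 :=
  calc s.encard ≤ t.encard + u.encard := (encard_le_encard h).trans (encard_union_le t u)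
    _ ≤ 1 + 1 := add_le_add (encard_le_one_iff_subsingleton.2 ht)
        (encard_le_one_iff_subsingleton.2 hu)
    _ = 2 := by norm_num

lemma subsingleton_of_forall_lt_false {s : Set ℝ} (h : ∀ p ∈ s, ∀ q ∈ s, p < q → False) :
    s.Subsingleton := fun p hp q hq =>
  le_antisymm (not_lt.1 fun hqp => h q hq p hp hqp) (not_lt.1 fun hpq => h p hp q hq hpq)

lemma encard_kinks_inter_Ioo_le_two {α β : ℝ} (hc : ∀ p ∈ Ioo α β, KinkCertsAt x y lam w b v p)
    (h0 : ∀ i, x i ∈ Ioo α β → lam i = 0) :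
    ({z | ¬ LocallyAffineAt (NNet w b v) z} ∩ Ioo α β).encard ≤ 2 := by
  have hmass : ∀ p ∈ Ioo α β, massAt x lam p = 0 := fun p hp =>
    massAt_eq_zero fun i hi => h0 i (hi ▸ hp)
  have hlam : ∀ {p q}, p ∈ Ioo α β → q ∈ Ioo α β → ∀ i, p ≤ x i → x i ≤ q → lam i = 0 :=
    fun hp hq i hpi hiq => h0 i ⟨hp.1.trans_le hpi, hiq.trans_lt hq.2⟩
  refine encard_le_two_of_subsingleton
    (t := {p ∈ Ioo α β | ∃ A ≠ 0, RightKinkCert x y lam p A})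
    (u := {p ∈ Ioo α β | ∃ A ≠ 0, LeftKinkCert x y lam p A}) ?_ ?_ ?_
  · rintro p ⟨hK, hp⟩
    rcases (hc p hp).exists_of_not_locallyAffineAt hK with h | h
    exacts [.inl ⟨hp, h⟩, .inr ⟨hp, h⟩]
  · refine subsingleton_of_forall_lt_false ?_
    rintro p ⟨hp, A, -, h₁⟩ q ⟨hq, A', hA', h₂⟩ hlt
    refine hA' (h₁.eq_zero_of_dualSum_eq hlt.ne (hmass p hp) (hmass q hq) ?_ h₂)
    refine (dualSum_eq_of_subset (fun i hi => ?_) fun i hi hni => ?_).symm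
    · simp only [Finset.mem_filter, Finset.mem_univ, true_and] at hi ⊢
      exact hlt.trans hi
    · simp only [Finset.mem_filter, Finset.mem_univ, true_and, not_lt] at hi hni
      exact hlam hp hq i hi.le hni
  · refine subsingleton_of_forall_lt_false ?_
    rintro p ⟨hp, A, -, h₁⟩ q ⟨hq, A', hA', h₂⟩ hlt
    refine hA' (h₁.eq_zero_of_dualSum_eq hlt.ne (hmass p hp) (hmass q hq) ?_ h₂)
    refine dualSum_eq_of_subset (fun i hi => ?_) fun i hi hni => ?_
    · simp only [Finset.mem_filter, Finset.mem_univ, true_and] at hi ⊢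
      exact hi.trans hlt
    · simp only [Finset.mem_filter, Finset.mem_univ, true_and, not_lt] at hi hni
      exact hlam hp hq i hni hi.le

lemma encard_concave_inter_Icc_le_two {u U : ℝ} (hl : ∀ i, 0 ≤ lam i) (hu : 0 ≤ u)
    (hy : ∀ i, x i ∈ Icc u U → y i = 1) (hc : ∀ p ∈ Icc u U, KinkCertsAt x y lam w b v p) :
    ({z | rightSlope w b v z < leftSlope w b v z} ∩ Icc u U).encard ≤ 2 := by
  have hy' : ∀ {p q}, p ∈ Icc u U → q ∈ Icc u U → ∀ i, x i ∈ Icc p q → y i = 1 :=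
    fun hp hq i hi => hy i ⟨hp.1.trans hi.1, hi.2.trans hq.2⟩
  refine encard_le_two_of_subsingleton
    (t := {p ∈ Icc u U | ∃ A < 0, RightKinkCert x y lam p A})
    (u := {p ∈ Icc u U | ∃ A > 0, LeftKinkCert x y lam p A}) ?_ ?_ ?_
  · rintro p ⟨hK, hp⟩
    rcases (hc p hp).exists_of_rightSlope_lt_leftSlope hK with h | h
    exacts [.inl ⟨hp, h⟩, .inr ⟨hp, h⟩]
  · refine subsingleton_of_forall_lt_false ?_
    rintro p ⟨hp, A, hA, h₁⟩ q ⟨hq, A', -, h₂⟩ hlt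
    exact h₁.false_of_neg hl (hu.trans hp.1) hlt (hy' hp hq) hA h₂
  · refine subsingleton_of_forall_lt_false ?_
    rintro p ⟨hp, A, hA, h₁⟩ q ⟨hq, A', -, h₂⟩ hlt
    exact h₁.false_of_pos hl (hu.trans hp.1) hlt (hy' hp hq) hA h₂

end Certificates

section Counting

variable {K C D : Set ℝ} {u U : ℝ}

lemma encard_inter_Ioo_le_add (K : Set ℝ) {α β : ℝ} (c : ℝ) :
    (K ∩ Ioo α β).encard ≤ (K ∩ Ioo α c).encard + 1 + (K ∩ Ioo c β).encard := by
  calc (K ∩ Ioo α β).encard ≤ ((K ∩ Ioo α c ∪ {c}) ∪ K ∩ Ioo c β).encard := by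
        refine encard_le_encard fun z ⟨hK, hz⟩ => ?_
        rcases lt_trichotomy z c with h | rfl | h
        · exact .inl (.inl ⟨hK, hz.1, h⟩)
        · exact .inl (.inr rfl)
        · exact .inr ⟨hK, h, hz.2⟩
    _ ≤ _ := (encard_union_le _ _).trans
        (add_le_add_left ((encard_union_le _ _).trans_eq (by rw [encard_singleton])) _)

lemma exists_pair_of_encard_le_two {s : Set ℝ} (huU : u ≤ U) (hs : s ⊆ Icc u U)
    (h2 : s.encard ≤ 2) : ∃ c₁ c₂, u ≤ c₁ ∧ c₁ ≤ c₂ ∧ c₂ ≤ U ∧ s ⊆ {c₁, c₂} := by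
  rcases s.eq_empty_or_nonempty with rfl | hne
  · exact ⟨u, u, le_rfl, le_rfl, huU, empty_subset _⟩
  have hfin : s.Finite := finite_of_encard_le_coe h2
  obtain ⟨c₁, hc₁, hmin⟩ := exists_min_image s id hfin hne
  obtain ⟨c₂, hc₂, hmax⟩ := exists_max_image s id hfin hne
  refine ⟨c₁, c₂, (hs hc₁).1, hmin c₂ hc₂, (hs hc₂).2, fun z hz => ?_⟩
  by_contra! hne
  simp only [mem_insert_iff, mem_singleton_iff, not_or] at hne
  have h₁ : c₁ < z := lt_of_le_of_ne (hmin z hz) (Ne.symm hne.1)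
  have h₂ : z < c₂ := lt_of_le_of_ne (hmax z hz) hne.2
  have h₃ : ({c₁, z, c₂} : Set ℝ).encard = 3 :=
    encard_eq_three.2 ⟨c₁, z, c₂, h₁.ne, (h₁.trans h₂).ne, h₂.ne, rfl⟩
  have := (encard_le_encard (insert_subset hc₁ (insert_subset hz
    (singleton_subset_iff.2 hc₂)))).trans h2
  rw [h₃] at this
  exact absurd this (by norm_num)

/-! Below, `K` stands for the kinks, `C ⊆ K` for the concave ones and `D` for the margin
points. -/

lemma encard_inter_Ioo_le_eight (hD : D.Finite)
    (hzone : ∀ α β, u ≤ α → β ≤ U → Disjoint D (Ioo α β) → (K ∩ Ioo α β).encard ≤ 2)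
    (hflat : ∀ l ∈ D, ∀ m ∈ D, ∀ r ∈ D, l < m → m < r → Disjoint C (Icc l r) →
      Disjoint K (Ioo l r))
    {α β : ℝ} (hα : u ≤ α) (hβ : β ≤ U) (hC : Disjoint C (Ioo α β)) :
    (K ∩ Ioo α β).encard ≤ 8 := by
  rcases (D ∩ Ioo α β).eq_empty_or_nonempty with hDe | hDne
  · exact (hzone α β hα hβ (disjoint_iff_inter_eq_empty.2 hDe)).trans (by norm_num)
  obtain ⟨l, ⟨hlD, hl⟩, hmin⟩ := exists_min_image _ id (hD.inter_of_left _) hDne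
  obtain ⟨r, ⟨hrD, hr⟩, hmax⟩ := exists_max_image _ id (hD.inter_of_left _) hDne
  have h₁ : (K ∩ Ioo α l).encard ≤ 2 := hzone α l hα (hl.2.le.trans hβ) <| disjoint_left.2
    fun z hzD hz => (hmin z ⟨hzD, hz.1, hz.2.trans hl.2⟩).not_gt hz.2
  have h₃ : (K ∩ Ioo r β).encard ≤ 2 := hzone r β (hα.trans hr.1.le) hβ <| disjoint_left.2
    fun z hzD hz => (hmax z ⟨hzD, hr.1.trans hz.1, hz.2⟩).not_gt hz.1
  have h₂ : (K ∩ Ioo l r).encard ≤ 2 := by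
    by_cases hm : ∃ m ∈ D, m ∈ Ioo l r
    · obtain ⟨m, hmD, hm⟩ := hm
      have := hflat l hlD m hmD r hrD hm.1 hm.2 (hC.mono_right (Icc_subset_Ioo hl.1 hr.2))
      simp [disjoint_iff_inter_eq_empty.1 this]
    · exact hzone l r (hα.trans hl.1.le) (hr.2.le.trans hβ) <| disjoint_left.2
        fun z hzD hz => hm ⟨z, hzD, hz⟩
  calc (K ∩ Ioo α β).encard
      ≤ (K ∩ Ioo α l).encard + 1 + ((K ∩ Ioo l r).encard + 1 + (K ∩ Ioo r β).encard) :=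
        (encard_inter_Ioo_le_add K l).trans (add_le_add le_rfl (encard_inter_Ioo_le_add K r))
    _ ≤ 2 + 1 + (2 + 1 + 2) := by gcongr
    _ = 8 := by norm_num

lemma encard_inter_Icc_le_twentyEight (hD : D.Finite) (hC : (C ∩ Icc u U).encard ≤ 2)
    (hzone : ∀ α β, u ≤ α → β ≤ U → Disjoint D (Ioo α β) → (K ∩ Ioo α β).encard ≤ 2)
    (hflat : ∀ l ∈ D, ∀ m ∈ D, ∀ r ∈ D, l < m → m < r → Disjoint C (Icc l r) →
      Disjoint K (Ioo l r)) :
    (K ∩ Icc u U).encard ≤ 28 := by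
  rcases lt_or_ge U u with hUu | huU
  · simp [Icc_eq_empty_of_lt hUu]
  obtain ⟨c₁, c₂, hu₁, h₁₂, h₂U, hCc⟩ :=
    exists_pair_of_encard_le_two huU inter_subset_right hC
  have hpiece : ∀ {α β}, u ≤ α → β ≤ U → Disjoint C (Ioo α β) → (K ∩ Ioo α β).encard ≤ 8 :=
    encard_inter_Ioo_le_eight hD hzone hflat
  have hfree : ∀ {α β}, u ≤ α → β ≤ U → c₁ ∉ Ioo α β → c₂ ∉ Ioo α β →
      Disjoint C (Ioo α β) :=
    fun hα hβ h₁ h₂ => disjoint_left.2 fun z hzC hz => by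
      rcases hCc ⟨hzC, hα.trans hz.1.le, hz.2.le.trans hβ⟩ with rfl | rfl
      exacts [h₁ hz, h₂ hz]
  calc (K ∩ Icc u U).encard ≤ ({u, U} ∪ K ∩ Ioo u U).encard := by
        refine encard_le_encard fun z ⟨hK, hz⟩ => ?_
        rcases hz.1.eq_or_lt with rfl | h₁
        · exact .inl (.inl rfl)
        rcases hz.2.eq_or_lt with rfl | h₂
        · exact .inl (.inr rfl)
        exact .inr ⟨hK, h₁, h₂⟩
    _ ≤ 2 + ((K ∩ Ioo u c₁).encard + 1 +
          ((K ∩ Ioo c₁ c₂).encard + 1 + (K ∩ Ioo c₂ U).encard)) :=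
        (encard_union_le _ _).trans (add_le_add (encard_insert_le _ _ |>.trans (by simp; norm_num))
          ((encard_inter_Ioo_le_add K c₁).trans
            (add_le_add le_rfl (encard_inter_Ioo_le_add K c₂))))
    _ ≤ 2 + (8 + 1 + (8 + 1 + 8)) := by
        gcongr
        · exact hpiece le_rfl (h₁₂.trans h₂U) (hfree le_rfl (h₁₂.trans h₂U)
            (fun h => h.2.false) fun h => (h.2.trans_le h₁₂).false)
        · exact hpiece hu₁ h₂U (hfree hu₁ h₂U (fun h => h.1.false) fun h => h.2.false)
        · exact hpiece (hu₁.trans h₁₂) le_rfl (hfree (hu₁.trans h₁₂) le_rfl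
            (fun h => (h.1.trans_le' h₁₂).false) fun h => h.1.false)
    _ = 28 := by norm_num

end Counting

theorem encard_kinks_inter_Icc_le_twentyEight {n k : ℕ} {x y : Fin n → ℝ} {w b v : Fin k → ℝ}
    (hKKT : IsKKT x y w b v) {u U : ℝ} (hu : 0 ≤ u) (hy : ∀ i, x i ∈ Icc u U → y i = 1) :
    ({z | ¬ LocallyAffineAt (NNet w b v) z} ∩ Icc u U).encard ≤ 28 := by
  obtain ⟨lam, hl, hcomp, hcert⟩ := hKKT.exists_multipliers
  have hc : ∀ p ∈ Icc u U, KinkCertsAt x y lam w b v p :=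
    fun p hp => hcert p fun i hi => hy i (hi ▸ hp)
  refine encard_inter_Icc_le_twentyEight (D := {z | ∃ i, x i = z ∧ NNet w b v z = 1})
    ((finite_range x).subset fun z ⟨i, hi, _⟩ => ⟨i, hi⟩)
    (encard_concave_inter_Icc_le_two hl hu hy hc) (fun α β hα hβ hD => ?_) ?_
  · have hαβ : ∀ {z}, z ∈ Ioo α β → z ∈ Icc u U :=
      fun hz => ⟨hα.trans hz.1.le, hz.2.le.trans hβ⟩
    refine encard_kinks_inter_Ioo_le_two (fun p hp => hc p (hαβ hp)) fun i hi => hcomp i ?_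
    rw [hy i (hαβ hi), one_mul]
    exact fun h1 => disjoint_left.1 hD ⟨i, rfl, h1⟩ hi
  · rintro l ⟨i, rfl, hl1⟩ m ⟨_, rfl, hm1⟩ r ⟨_, rfl, hr1⟩ hlm hmr hC
    refine disjoint_left.2 fun z hK hz => hK (locallyAffineAt_NNet_of_eq hlm hmr hz ?_
      (hl1.trans hm1.symm) (hr1.trans hm1.symm))
    exact fun z hz => not_lt.1 fun h => disjoint_left.1 hC h hz

theorem stmt5_general {n k : ℕ} (x y : Fin n → ℝ)
    (hx : StrictMono x)
    (w b v : Fin k → ℝ) (hKKT : IsKKT x y w b v)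
    (a c : Fin n) (ha : 0 ≤ x a)
    (hyac : ∀ i, a ≤ i → i ≤ c → y i = 1)
    (m : ℕ) (idx : Fin m → Fin n)
    (hrange : ∀ i : Fin n,
      (a ≤ i ∧ i ≤ c ∧ y i * NNet w b v (x i) = 1) ↔ i ∈ Set.range idx)
    (hm : 0 < m) :
    {z ∈ Set.Icc (x (idx ⟨0, hm⟩)) (x (idx ⟨m - 1, Nat.sub_lt hm Nat.one_pos⟩)) |
      ¬ LocallyAffineAt (NNet w b v) z}.encard ≤ 30 := by
  obtain ⟨hfirst, -, -⟩ := (hrange _).2 (mem_range_self ⟨0, hm⟩)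
  obtain ⟨-, hlast, -⟩ := (hrange _).2 (mem_range_self ⟨m - 1, Nat.sub_lt hm Nat.one_pos⟩)
  calc _ = ({z | ¬ LocallyAffineAt (NNet w b v) z} ∩ Icc _ _).encard := by
        rw [inter_comm]; rfl
    _ ≤ 28 := encard_kinks_inter_Icc_le_twentyEight hKKT (ha.trans (hx.monotone hfirst))
      fun i hi => hyac i (hfirst.trans (hx.le_iff_le.1 hi.1)) ((hx.le_iff_le.1 hi.2).trans hlast)
    _ ≤ 30 := by norm_num

/-- With `ℐ'_{a,c} = {i : a ≤ i ≤ c, y_i N_θ(x_i) = 1}` enumerated by the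
strictly monotone `idx : Fin m → Fin n` (with `m > 0`), there are at most `30` points in
`[x_{i_1}, x_{i_m}]` at which `N_θ` is not locally affine. -/
theorem stmt5 {n k : ℕ} (x y : Fin n → ℝ)
    (hx : StrictMono x) (hy : ∀ i, y i = 1 ∨ y i = -1)
    (w b v : Fin k → ℝ) (hKKT : IsKKT x y w b v)
    (a c : Fin n) (hac : a < c) (ha : 0 ≤ x a) (hxac : x a < x c)
    (hyac : ∀ i, a ≤ i → i ≤ c → y i = 1)
    (m : ℕ) (idx : Fin m → Fin n) (hmono : StrictMono idx)
    (hrange : ∀ i : Fin n,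
      (a ≤ i ∧ i ≤ c ∧ y i * NNet w b v (x i) = 1) ↔ i ∈ Set.range idx)
    (hm : 0 < m) :
    {z ∈ Set.Icc (x (idx ⟨0, hm⟩)) (x (idx ⟨m - 1, Nat.sub_lt hm Nat.one_pos⟩)) |
      ¬ LocallyAffineAt (NNet w b v) z}.encard ≤ 30 :=
  stmt5_general x y hx w b v hKKT a c ha hyac m idx hrange hm
end

section
/- Let S = {(x_i, y_i)}_{i=1}^n ⊆ ℝ × {−1,1} be a dataset with x_1 < x_2 < … < x_n, and suppose θ = (w, b, v) satisfies the KKT conditions of the maximum-margin problem for a width-k depth-2 ReLU network on S. Let 1 ≤ a < b ≤ n be such that x_b > x_a ≥ 0 and y_i = −1 for all a ≤ i ≤ b. Then in the interval [x_a, x_b] the network N_θ has at most two activation points at which the derivative of N_θ increases. -/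
open Finset

lemma deriv_affine (C D t : ℝ) : deriv (fun s => C * s + D) t = C := by
  simpa using (((hasDerivAt_id t).const_mul C).add_const D).deriv

lemma deriv_NNet_eq {k : ℕ} (w b v : Fin k → ℝ) (t : ℝ)
    (h : ∀ j, w j ≠ 0 → w j * t + b j ≠ 0) :
    deriv (NNet w b v) t = ∑ j, if 0 < w j * t + b j then v j * w j else 0 := by
  have hj : ∀ j : Fin k, ∀ᶠ s in nhds t, v j * relu (w j * s + b j) =
      (if 0 < w j * t + b j then v j * w j else 0) * s +
      (if 0 < w j * t + b j then v j * b j else 0) := by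
    intro j
    by_cases hw : w j = 0
    · refine Filter.Eventually.of_forall fun s => ?_
      simp only [hw, zero_mul, zero_add, relu]
      split_ifs with hb
      · rw [max_eq_right hb.le]; ring
      · rw [max_eq_left (not_lt.1 hb)]
        ring
    · have hc : Continuous fun s : ℝ => w j * s + b j := by continuity
      rcases (h j hw).lt_or_gt with hneg | hpos
      · have hev : ∀ᶠ s in nhds t, w j * s + b j < 0 :=
          (isOpen_lt hc continuous_const).eventually_mem (by simpa using hneg)
        filter_upwards [hev] with s hs
        simp only [if_neg (asymm hneg), relu, max_eq_left hs.le]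
        ring
      · have hev : ∀ᶠ s in nhds t, 0 < w j * s + b j :=
          (isOpen_lt continuous_const hc).eventually_mem (by simpa using hpos)
        filter_upwards [hev] with s hs
        simp only [if_pos hpos, relu, max_eq_right hs.le]
        ring
  have hev : NNet w b v =ᶠ[nhds t] fun s =>
      (∑ j, if 0 < w j * t + b j then v j * w j else 0) * s +
      (∑ j, if 0 < w j * t + b j then v j * b j else 0) := by
    have := Filter.eventually_all.2 hj
    filter_upwards [this] with s hs
    simp only [NNet]
    rw [Finset.sum_mul, ← Finset.sum_add_distrib]
    exact Finset.sum_congr rfl fun j _ => hs j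
  rw [hev.deriv_eq, deriv_affine]

lemma exists_pos_neuron {k : ℕ} (w b v : Fin k → ℝ) (z : ℝ)
    (h : DerivIncreasesAt (NNet w b v) z) :
    ∃ j, 0 < v j ∧ w j ≠ 0 ∧ w j * z + b j = 0 := by
  by_contra hno
  push_neg at hno
  obtain ⟨ε₀, hε₀, hinc⟩ := h
  -- sign preservation near z for non-breaking neurons
  have hev : ∀ᶠ s in nhds z, ∀ j : Fin k,
      (0 < w j * z + b j → 0 < w j * s + b j) ∧ (w j * z + b j < 0 → w j * s + b j < 0) := by
    rw [Filter.eventually_all]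
    intro j
    have hc : Continuous fun s : ℝ => w j * s + b j := by continuity
    rcases lt_trichotomy (w j * z + b j) 0 with hneg | hzero | hpos
    · have := (isOpen_lt hc continuous_const).eventually_mem (by simpa using hneg)
      filter_upwards [this] with s hs
      exact ⟨fun hp => absurd hneg (asymm hp), fun _ => hs⟩
    · refine Filter.Eventually.of_forall fun s => ?_
      constructor
      · intro hp; rw [hzero] at hp; exact absurd hp (lt_irrefl 0)
      · intro hp; rw [hzero] at hp; exact absurd hp (lt_irrefl 0)
    · have := (isOpen_lt continuous_const hc).eventually_mem (by simpa using hpos)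
      filter_upwards [this] with s hs
      exact ⟨fun _ => hs, fun hn => absurd hpos (asymm hn)⟩
  rw [Metric.eventually_nhds_iff] at hev
  obtain ⟨δ, hδ, hsgn⟩ := hev
  set ε := min ε₀ δ / 2 with hε
  have hεpos : 0 < ε := by positivity
  have hεδ : ε < δ := by
    have : min ε₀ δ ≤ δ := min_le_right _ _
    linarith
  have hεε₀ : ε < ε₀ := by
    have : min ε₀ δ ≤ ε₀ := min_le_left _ _
    linarith
  have hmem : ∀ s : ℝ, dist s z < δ → ∀ j : Fin k,
      (0 < w j * z + b j → 0 < w j * s + b j) ∧ (w j * z + b j < 0 → w j * s + b j < 0) :=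
    fun s hs => hsgn hs
  have hd1 : dist (z + ε) z < δ := by
    rw [Real.dist_eq]; rw [show z + ε - z = ε by ring, abs_of_pos hεpos]; exact hεδ
  have hd2 : dist (z - ε) z < δ := by
    rw [Real.dist_eq]; rw [show z - ε - z = -ε by ring, abs_neg, abs_of_pos hεpos]; exact hεδ
  -- nonvanishing at z ± ε
  have hnv : ∀ (s : ℝ), dist s z < δ → s ≠ z → (∀ j, w j ≠ 0 → w j * s + b j ≠ 0) := by
    intro s hs hsz j hwj
    rcases lt_trichotomy (w j * z + b j) 0 with hneg | hzero | hpos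
    · exact ((hmem s hs j).2 hneg).ne
    · have : w j * s + b j = w j * (s - z) := by
        have : b j = -(w j * z) := by linarith
        rw [this]; ring
      rw [this]
      exact mul_ne_zero hwj (sub_ne_zero.2 hsz)
    · exact ((hmem s hs j).1 hpos).ne'
  have hda := deriv_NNet_eq w b v (z + ε) (hnv _ hd1 (by linarith))
  have hdb := deriv_NNet_eq w b v (z - ε) (hnv _ hd2 (by linarith))
  have hle : deriv (NNet w b v) (z + ε) ≤ deriv (NNet w b v) (z - ε) := by
    rw [hda, hdb]
    apply Finset.sum_le_sum
    intro j _
    rcases lt_trichotomy (w j * z + b j) 0 with hneg | hzero | hpos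
    · rw [if_neg (asymm ((hmem _ hd1 j).2 hneg)), if_neg (asymm ((hmem _ hd2 j).2 hneg))]
    · by_cases hwj : w j = 0
      · have hb0 : b j = 0 := by rw [hwj] at hzero; linarith
        simp [hwj, hb0]
      · have hvj : v j ≤ 0 := by
          by_contra hv
          push_neg at hv
          exact hno j hv hwj hzero
        have hbj : b j = -(w j * z) := by linarith
        have e1 : w j * (z + ε) + b j = w j * ε := by rw [hbj]; ring
        have e2 : w j * (z - ε) + b j = -(w j * ε) := by rw [hbj]; ring
        rcases (Ne.lt_or_gt hwj) with hwn | hwp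
        · rw [e1, e2, if_neg (by nlinarith), if_pos (by nlinarith)]
          nlinarith
        · rw [e1, e2, if_pos (by nlinarith), if_neg (by nlinarith)]
          nlinarith
    · rw [if_pos ((hmem _ hd1 j).1 hpos), if_pos ((hmem _ hd2 j).1 hpos)]
  exact absurd (hinc ε hεpos hεε₀) (not_lt.2 hle)

lemma key_unique {n k : ℕ} (x y : Fin n → ℝ) (hx : StrictMono x)
    (lam : Fin n → ℝ) (sg : Fin n → Fin k → ℝ) (w b v : Fin k → ℝ)
    (hlam : ∀ i, 0 ≤ lam i)
    (hsg01 : ∀ i j, sg i j ∈ Set.Icc (0:ℝ) 1)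
    (hsg1 : ∀ i j, 0 < w j * x i + b j → sg i j = 1)
    (hsg0 : ∀ i j, w j * x i + b j < 0 → sg i j = 0)
    (hw : ∀ j, v j ≠ 0 → w j = ∑ i, lam i * y i * v j * sg i j * x i)
    (hb : ∀ j, v j ≠ 0 → b j = ∑ i, lam i * y i * v j * sg i j)
    (a c : Fin n) (ha : 0 ≤ x a)
    (hyac : ∀ i, a ≤ i → i ≤ c → y i = -1)
    (j j' : Fin k) (hv : 0 < v j) (hv' : 0 < v j')
    (hwj : w j ≠ 0) (hwj' : w j' ≠ 0) (hsgn : 0 < w j ↔ 0 < w j')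
    (z z' : ℝ) (hz : x a ≤ z) (hz2 : z ≤ x c) (hz'1 : x a ≤ z') (hz'2 : z' ≤ x c)
    (hbr : w j * z + b j = 0) (hbr' : w j' * z' + b j' = 0)
    (hzz : z < z') : False := by
  -- rewrite the pre-activations through the breakpoints
  have hact : ∀ t : ℝ, w j * t + b j = w j * (t - z) := by
    intro t
    have : b j = -(w j * z) := by linarith
    rw [this]; ring
  have hact' : ∀ t : ℝ, w j' * t + b j' = w j' * (t - z') := by
    intro t
    have : b j' = -(w j' * z') := by linarith
    rw [this]; ring
  -- factored KKT sums (kept opaque)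
  obtain ⟨A, hA⟩ : ∃ A : ℝ, A = ∑ i, lam i * y i * sg i j * x i := ⟨_, rfl⟩
  obtain ⟨B, hB⟩ : ∃ B : ℝ, B = ∑ i, lam i * y i * sg i j := ⟨_, rfl⟩
  obtain ⟨A', hA'⟩ : ∃ A' : ℝ, A' = ∑ i, lam i * y i * sg i j' * x i := ⟨_, rfl⟩
  obtain ⟨B', hB'⟩ : ∃ B' : ℝ, B' = ∑ i, lam i * y i * sg i j' := ⟨_, rfl⟩
  have hwA : w j = v j * A := by
    rw [hw j hv.ne', hA, Finset.mul_sum]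
    exact Finset.sum_congr rfl fun i _ => by ring
  have hbB : b j = v j * B := by
    rw [hb j hv.ne', hB, Finset.mul_sum]
    exact Finset.sum_congr rfl fun i _ => by ring
  have hwA' : w j' = v j' * A' := by
    rw [hw j' hv'.ne', hA', Finset.mul_sum]
    exact Finset.sum_congr rfl fun i _ => by ring
  have hbB' : b j' = v j' * B' := by
    rw [hb j' hv'.ne', hB', Finset.mul_sum]
    exact Finset.sum_congr rfl fun i _ => by ring
  have hG : A * z + B = 0 := by
    have h0 : v j * (A * z + B) = 0 := by rw [← hbr, hwA, hbB]; ring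
    rcases mul_eq_zero.1 h0 with h | h
    · exact absurd h hv.ne'
    · exact h
  have hG'0 : A' * z' + B' = 0 := by
    have h0 : v j' * (A' * z' + B') = 0 := by rw [← hbr', hwA', hbB']; ring
    rcases mul_eq_zero.1 h0 with h | h
    · exact absurd h hv'.ne'
    · exact h
  have hG' : A' * z + B' = -(A' * (z' - z)) := by linarith [hG'0]
  -- the sign σ
  obtain ⟨σ, hσw', hσcase⟩ :
      ∃ σ : ℝ, 0 < σ * w j' ∧
        ((σ = 1 ∧ 0 < w j ∧ 0 < w j') ∨ (σ = -1 ∧ w j < 0 ∧ w j' < 0)) := by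
    rcases Ne.lt_or_gt hwj with hn | hp
    · have hn' : w j' < 0 := by
        rcases Ne.lt_or_gt hwj' with h | h
        · exact h
        · exact absurd (hsgn.2 h) (asymm hn)
      exact ⟨-1, by linarith, Or.inr ⟨rfl, hn, hn'⟩⟩
    · have hp' := hsgn.1 hp
      exact ⟨1, by linarith, Or.inl ⟨rfl, hp, hp'⟩⟩
  have hσA' : 0 < σ * A' := by
    have hkey : σ * w j' = v j' * (σ * A') := by rw [hwA']; ring
    rcases lt_trichotomy (σ * A') 0 with h | h | h
    · have := mul_neg_of_pos_of_neg hv' h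
      linarith
    · rw [h, mul_zero] at hkey; linarith
    · exact h
  have hz0 : 0 ≤ z := le_trans ha hz
  -- sum expression
  have hsum : (A' * z + B') - (A * z + B) =
      ∑ i, lam i * y i * (sg i j' - sg i j) * (x i * z + 1) := by
    rw [hA, hB, hA', hB', Finset.sum_mul, Finset.sum_mul, ← Finset.sum_add_distrib,
      ← Finset.sum_add_distrib, ← Finset.sum_sub_distrib]
    exact Finset.sum_congr rfl fun i _ => by ring
  have hterm : ∀ i : Fin n, 0 ≤ σ * (lam i * y i * (sg i j' - sg i j) * (x i * z + 1)) := by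
    intro i
    rcases lt_or_ge (x i) z with hlt | hge
    · -- x i < z : both sg agree
      have heq : sg i j' = sg i j := by
        rcases hσcase with ⟨hσ1, hp, hp'⟩ | ⟨hσ1, hn, hn'⟩
        · rw [hsg0 i j (by rw [hact]; exact mul_neg_of_pos_of_neg hp (by linarith)),
            hsg0 i j' (by rw [hact']; exact mul_neg_of_pos_of_neg hp' (by linarith))]
        · rw [hsg1 i j (by rw [hact]; exact mul_pos_of_neg_of_neg hn (by linarith)),
            hsg1 i j' (by rw [hact']; exact mul_pos_of_neg_of_neg hn' (by linarith))]
      rw [heq]; simp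
    · rcases lt_or_ge z' (x i) with hgt | hle
      · -- x i > z' : both sg agree
        have heq : sg i j' = sg i j := by
          rcases hσcase with ⟨hσ1, hp, hp'⟩ | ⟨hσ1, hn, hn'⟩
          · rw [hsg1 i j (by rw [hact]; exact mul_pos hp (by linarith)),
              hsg1 i j' (by rw [hact']; exact mul_pos hp' (by linarith))]
          · rw [hsg0 i j (by rw [hact]; exact mul_neg_of_neg_of_pos hn (by linarith)),
              hsg0 i j' (by rw [hact']; exact mul_neg_of_neg_of_pos hn' (by linarith))]
        rw [heq]; simp
      · -- z ≤ x i ≤ z'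
        have hia : a ≤ i := by
          by_contra hcon
          push_neg at hcon
          exact absurd (hx hcon) (not_lt.2 (le_trans hz hge))
        have hic : i ≤ c := by
          by_contra hcon
          push_neg at hcon
          exact absurd (hx hcon) (not_lt.2 (le_trans hle hz'2))
        have hyi : y i = -1 := hyac i hia hic
        have hpos : (0:ℝ) < x i * z + 1 := by
          have h1 : 0 ≤ x i := le_trans hz0 hge
          have := mul_nonneg h1 hz0
          linarith
        have hsgd : 0 ≤ σ * (sg i j - sg i j') := by
          rcases hσcase with ⟨hσ1, hp, hp'⟩ | ⟨hσ1, hn, hn'⟩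
          · have hd : sg i j' ≤ sg i j := by
              rcases eq_or_lt_of_le hle with hzeq | hzlt
              · have h1 : sg i j = 1 := hsg1 i j (by rw [hact]; exact mul_pos hp (by linarith))
                rw [h1]; exact (hsg01 i j').2
              · have h1 : sg i j' = 0 :=
                  hsg0 i j' (by rw [hact']; exact mul_neg_of_pos_of_neg hp' (by linarith))
                rw [h1]; exact (hsg01 i j).1
            rw [hσ1]; linarith
          · have hd : sg i j ≤ sg i j' := by
              rcases eq_or_lt_of_le hge with hzeq | hzlt
              · have h1 : sg i j' = 1 :=
                  hsg1 i j' (by rw [hact']; exact mul_pos_of_neg_of_neg hn' (by linarith))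
                rw [h1]; exact (hsg01 i j).2
              · have h1 : sg i j = 0 :=
                  hsg0 i j (by rw [hact]; exact mul_neg_of_neg_of_pos hn (by linarith))
                rw [h1]; exact (hsg01 i j').1
            rw [hσ1]; linarith
        have hl := hlam i
        rw [hyi]
        have hkey2 := mul_nonneg (mul_nonneg hl hsgd) hpos.le
        nlinarith [hkey2]
  have h1 : 0 ≤ σ * ((A' * z + B') - (A * z + B)) := by
    rw [hsum, Finset.mul_sum]
    exact Finset.sum_nonneg fun i _ => hterm i
  rw [hG, hG'] at h1
  have := mul_pos hσA' (sub_pos.2 hzz)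
  nlinarith [this]


/-- If `a < c`, `0 ≤ x_a < x_c`, and `y_i = -1` for all `a ≤ i ≤ c`, then in
`[x_a, x_c]` the network `N_θ` has at most two activation points at which its derivative
increases. -/
theorem stmt6 {n k : ℕ} (x y : Fin n → ℝ)
    (hx : StrictMono x) (hy : ∀ i, y i = 1 ∨ y i = -1)
    (w b v : Fin k → ℝ) (hKKT : IsKKT x y w b v)
    (a c : Fin n) (hac : a < c) (ha : 0 ≤ x a) (hxac : x a < x c)
    (hyac : ∀ i, a ≤ i → i ≤ c → y i = -1) :
    {z ∈ Set.Icc (x a) (x c) |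
      IsActivationPoint w b v z ∧ DerivIncreasesAt (NNet w b v) z}.encard ≤ 2 := by
  
  obtain ⟨hmargin, lam, sg, hlam, hsg01, hsg1, hsg0, hcomp, hwkkt, hbkkt⟩ := hKKT
  have hsub : {z ∈ Set.Icc (x a) (x c) |
      IsActivationPoint w b v z ∧ DerivIncreasesAt (NNet w b v) z} ⊆
      {z : ℝ | z ∈ Set.Icc (x a) (x c) ∧ ∃ j, 0 < v j ∧ 0 < w j ∧ w j * z + b j = 0} ∪
      {z : ℝ | z ∈ Set.Icc (x a) (x c) ∧ ∃ j, 0 < v j ∧ w j < 0 ∧ w j * z + b j = 0} := by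
    rintro z ⟨hzI, _, hinc⟩
    obtain ⟨j, hvj, hwj, hbr⟩ := exists_pos_neuron w b v z hinc
    rcases Ne.lt_or_gt hwj with hn | hp
    · exact Or.inr ⟨hzI, j, hvj, hn, hbr⟩
    · exact Or.inl ⟨hzI, j, hvj, hp, hbr⟩
  refine le_trans (Set.encard_le_encard hsub) (le_trans (Set.encard_union_le _ _) ?_)
  have h1 : {z : ℝ | z ∈ Set.Icc (x a) (x c) ∧
      ∃ j, 0 < v j ∧ 0 < w j ∧ w j * z + b j = 0}.encard ≤ 1 := by
    rw [Set.encard_le_one_iff]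
    rintro z1 z2 ⟨hzI1, j1, hv1, hw1, hbr1⟩ ⟨hzI2, j2, hv2, hw2, hbr2⟩
    by_contra hne
    rcases Ne.lt_or_gt hne with h | h
    · exact key_unique x y hx lam sg w b v hlam hsg01 hsg1 hsg0 hwkkt hbkkt a c ha hyac
        j1 j2 hv1 hv2 (ne_of_gt hw1) (ne_of_gt hw2) (iff_of_true hw1 hw2)
        z1 z2 hzI1.1 hzI1.2 hzI2.1 hzI2.2 hbr1 hbr2 h
    · exact key_unique x y hx lam sg w b v hlam hsg01 hsg1 hsg0 hwkkt hbkkt a c ha hyac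
        j2 j1 hv2 hv1 (ne_of_gt hw2) (ne_of_gt hw1) (iff_of_true hw2 hw1)
        z2 z1 hzI2.1 hzI2.2 hzI1.1 hzI1.2 hbr2 hbr1 h
  have h2 : {z : ℝ | z ∈ Set.Icc (x a) (x c) ∧
      ∃ j, 0 < v j ∧ w j < 0 ∧ w j * z + b j = 0}.encard ≤ 1 := by
    rw [Set.encard_le_one_iff]
    rintro z1 z2 ⟨hzI1, j1, hv1, hw1, hbr1⟩ ⟨hzI2, j2, hv2, hw2, hbr2⟩
    by_contra hne
    rcases Ne.lt_or_gt hne with h | h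
    · exact key_unique x y hx lam sg w b v hlam hsg01 hsg1 hsg0 hwkkt hbkkt a c ha hyac
        j1 j2 hv1 hv2 (ne_of_lt hw1) (ne_of_lt hw2) (iff_of_false (asymm hw1) (asymm hw2))
        z1 z2 hzI1.1 hzI1.2 hzI2.1 hzI2.2 hbr1 hbr2 h
    · exact key_unique x y hx lam sg w b v hlam hsg01 hsg1 hsg0 hwkkt hbkkt a c ha hyac
        j2 j1 hv2 hv1 (ne_of_lt hw2) (ne_of_lt hw1) (iff_of_false (asymm hw2) (asymm hw1))
        z2 z1 hzI2.1 hzI2.2 hzI1.1 hzI1.2 hbr2 hbr1 h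
  calc _ ≤ (1 : ℕ∞) + 1 := add_le_add h1 h2
    _ = 2 := by norm_num
end
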